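/- arXiv:2009.05382 — 9 statements merged into one kernel-verified Lean document; each statement's English description precedes it below -/
import Mathlib

section
/- Let (V,E) be an undirected graph, s,t ∈ V, M ⊆ E a set of vulnerable edges, and k ≥ 0 an integer. If X ⊆ E is feasible for undirected FTP (i.e., for every F ⊆ M with |F| ≤ k the graph (V, X∖F) contains an s-t path), then there exists an orientation X⃗ of X, assigning to each edge of X exactly one of its two possible directions, such that for every F ⊆ M with |F| ≤ k the directed graph (V, X⃗ minus the oriented arcs coming from edges of F) contains a directed s-t path. -/
/-!
Give each edge of `X` capacity `1` in both directions if it is vulnerable and `k + 1` otherwise.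
Feasibility says exactly that every `s`-`t` cut has capacity at least `k + 1`, so by the
augmenting-path argument of max-flow/min-cut there is an integral skew-symmetric `s`-`t` flow of
value `k + 1`. Orient every edge in the direction of its flow. If deleting `F` cut `t` off from
`s`, the flow leaving the set reachable from `s` would have to use arcs of `F` only, each carrying
one unit, so `k + 1 ≤ |F|`.
-/

/-- `uReach S a b`: the undirected graph with edge set `S` contains an `a`-`b` path. -/
def uReach {V : Type*} [DecidableEq V] (S : Finset (Sym2 V)) (a b : V) : Prop :=
  Relation.ReflTransGen (fun x y => Sym2.mk x y ∈ S) a b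

/-- Feasibility for undirected Fault-Tolerant Path: for every `F ⊆ M` with `|F| ≤ k`,
the graph `(V, X \ F)` contains an `s`-`t` path. -/
def ftpuFeasible {V : Type*} [DecidableEq V] (X M : Finset (Sym2 V)) (s t : V) (k : ℕ) : Prop :=
  ∀ F ⊆ M, F.card ≤ k → uReach (X \ F) s t

open Finset Relation

theorem Relation.ReflTransGen.exists_nodup_isChain {α : Type*} {R : α → α → Prop} {a b : α}
    (h : ReflTransGen R a b) :
    ∃ l : List α, (a :: l).IsChain R ∧ (a :: l).Nodup ∧
      (a :: l).getLast (List.cons_ne_nil _ _) = b := by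
  induction h using Relation.ReflTransGen.head_induction_on with
  | refl => exact ⟨[], .singleton _, List.nodup_singleton _, rfl⟩
  | @head a c hac _ ih =>
    obtain ⟨l, hchain, hnodup, hlast⟩ := ih
    by_cases ha : a ∈ c :: l
    · obtain ⟨l₁, l₂, hsplit⟩ := List.append_of_mem ha
      have hsuffix : a :: l₂ <:+ c :: l := ⟨l₁, hsplit.symm⟩
      refine ⟨l₂, hchain.suffix hsuffix, hnodup.sublist hsuffix.sublist, ?_⟩
      simp only [hsplit, List.getLast_append_of_ne_nil _ (List.cons_ne_nil _ _)] at hlast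
      exact hlast
    · exact ⟨c :: l, .cons_cons hac hchain, List.nodup_cons.2 ⟨ha, hnodup⟩,
        by rwa [List.getLast_cons_cons]⟩

theorem Relation.ReflTransGen.exists_rel_of_not {α : Type*} {R : α → α → Prop} {a b : α}
    (h : ReflTransGen R a b) (P : α → Prop) (ha : P a) (hb : ¬ P b) :
    ∃ x y, P x ∧ ¬ P y ∧ R x y := by
  induction h with
  | refl => exact absurd ha hb
  | @tail c d _ hcd ih =>
    by_cases hc : P c
    · exact ⟨c, d, hc, hb, hcd⟩
    · exact ih hc

section Flow

variable {V : Type*}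

def netFlow (T : Finset V) (φ : V → V → ℤ) (u : V) : ℤ := ∑ v ∈ T, φ u v

structure IsSkewFlow (c : V → V → ℕ) (φ : V → V → ℤ) : Prop where
  skew : ∀ u v, φ v u = -φ u v
  le_cap : ∀ u v, φ u v ≤ c u v

structure IsSTFlow (T : Finset V) (c : V → V → ℕ) (s t : V) (r : ℤ) (φ : V → V → ℤ) : Prop
    extends IsSkewFlow c φ where
  netFlow_eq_zero : ∀ u ∈ T, u ≠ s → u ≠ t → netFlow T φ u = 0
  netFlow_source : netFlow T φ s = r

variable {T : Finset V} {c : V → V → ℕ} {φ : V → V → ℤ} {s t a b : V}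

theorem IsSkewFlow.mem_of_lt_cap (hφ : IsSkewFlow c φ) (hc : ∀ u v, 0 < c u v → u ∈ T ∧ v ∈ T)
    {u v : V} (h : φ u v < c u v) : u ∈ T ∧ v ∈ T := by
  have := hφ.le_cap v u
  rw [hφ.skew] at this
  rcases Nat.eq_zero_or_pos (c u v) with h0 | h0
  · exact (hc v u (by omega)).symm
  · exact hc u v h0

variable [DecidableEq V]

def pushArc (φ : V → V → ℤ) (a b : V) (x y : V) : ℤ :=
  φ x y + ((if x = a ∧ y = b then 1 else 0) - if x = b ∧ y = a then 1 else 0)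

theorem pushArc_of_ne {x y : V} (h : s(x, y) ≠ s(a, b)) : pushArc φ a b x y = φ x y := by
  simp only [ne_eq, Sym2.eq_iff, not_or] at h
  simp [pushArc, h.1, h.2]

theorem IsSkewFlow.pushArc (hφ : IsSkewFlow c φ) (hab : φ a b < c a b) :
    IsSkewFlow c (pushArc φ a b) where
  skew u v := by
    simp only [_root_.pushArc, hφ.skew u v]
    split_ifs <;> grind
  le_cap u v := by
    have := hφ.le_cap u v
    simp only [_root_.pushArc]
    split_ifs <;> grind

theorem netFlow_pushArc (ha : a ∈ T) (hb : b ∈ T) (u : V) :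
    netFlow T (pushArc φ a b) u =
      netFlow T φ u + ((if u = a then 1 else 0) - if u = b then 1 else 0) := by
  simp [netFlow, pushArc, sum_add_distrib, sum_sub_distrib, ite_and, ha, hb]

theorem IsSkewFlow.exists_augment (hc : ∀ u v, 0 < c u v → u ∈ T ∧ v ∈ T) :
    ∀ (l : List V) (a : V) (φ : V → V → ℤ), IsSkewFlow c φ →
      (a :: l).IsChain (fun u v => φ u v < c u v) → (a :: l).Nodup →
      ∃ ψ, IsSkewFlow c ψ ∧ ∀ u, netFlow T ψ u = netFlow T φ u +
        ((if u = a then 1 else 0) - if u = (a :: l).getLast (List.cons_ne_nil _ _) then 1 else 0)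
  | [], a, φ, hφ, _, _ =>
    ⟨φ, hφ, fun u => by rw [List.getLast_singleton, sub_self, add_zero]⟩
  | b :: l, a, φ, hφ, hchain, hnodup => by
    obtain ⟨hab, hchain⟩ := List.isChain_cons_cons.1 hchain
    obtain ⟨ha, hnodup⟩ := List.nodup_cons.1 hnodup
    -- the path is simple, so pushing along its first arc leaves the rest of it residual
    have hchain' : (b :: l).IsChain (fun u v => _root_.pushArc φ a b u v < c u v) := by
      refine hchain.imp_of_mem_imp fun x y hx hy hxy => ?_
      have hne : s(x, y) ≠ s(a, b) := by
        rw [ne_eq, Sym2.eq_iff]; rintro (⟨rfl, -⟩ | ⟨-, rfl⟩) <;> contradiction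
      rwa [pushArc_of_ne hne]
    obtain ⟨ψ, hψ, hnet⟩ := exists_augment hc l b _ (hφ.pushArc hab) hchain' hnodup
    obtain ⟨haT, hbT⟩ := hφ.mem_of_lt_cap hc hab
    refine ⟨ψ, hψ, fun u => ?_⟩
    rw [hnet, netFlow_pushArc haT hbT, List.getLast_cons_cons]
    ring

theorem IsSTFlow.sum_cut {r : ℤ} (hφ : IsSTFlow T c s t r φ) {A : Finset V} (hAT : A ⊆ T)
    (hsA : s ∈ A) (htA : t ∉ A) : ∑ u ∈ A, ∑ v ∈ T \ A, φ u v = r := by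
  have hinner : ∑ u ∈ A, ∑ v ∈ A, φ u v = 0 := by
    have hanti : ∑ u ∈ A, ∑ v ∈ A, φ u v = ∑ u ∈ A, ∑ v ∈ A, -φ u v := by
      rw [sum_comm]
      exact sum_congr rfl fun u _ => sum_congr rfl fun v _ => hφ.skew u v
    simp only [sum_neg_distrib] at hanti
    omega
  have hnet : ∑ u ∈ A, netFlow T φ u = r := by
    rw [sum_eq_single_of_mem s hsA fun u hu hus => hφ.netFlow_eq_zero u (hAT hu) hus
      (fun h => htA (h ▸ hu)), hφ.netFlow_source]
  simpa only [netFlow, ← sum_sdiff hAT, sum_add_distrib, hinner, add_zero] using hnet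

theorem exists_isSTFlow (hc : ∀ u v, 0 < c u v → u ∈ T ∧ v ∈ T) (hs : s ∈ T) (hst : s ≠ t)
    (r : ℕ) (hcut : ∀ A ⊆ T, s ∈ A → t ∉ A → r ≤ ∑ u ∈ A, ∑ v ∈ T \ A, c u v) :
    ∃ φ, IsSTFlow T c s t r φ := by
  induction r with
  | zero =>
    exact ⟨0, ⟨fun _ _ => by simp, fun _ _ => by simp⟩, by simp [netFlow], by simp [netFlow]⟩
  | succ r ih =>
    obtain ⟨φ, hφ⟩ := ih fun A hAT hsA htA => (hcut A hAT hsA htA).trans' (Nat.le_succ r)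
    by_cases hreach : ReflTransGen (fun u v => φ u v < c u v) s t
    · obtain ⟨l, hchain, hnodup, hlast⟩ := hreach.exists_nodup_isChain
      obtain ⟨ψ, hψ, hnet⟩ := hφ.toIsSkewFlow.exists_augment hc l s φ hchain hnodup
      rw [hlast] at hnet
      refine ⟨ψ, hψ, fun u hu hus hut => ?_, ?_⟩
      · simp [hnet, hφ.netFlow_eq_zero u hu hus hut, hus, hut]
      · simp [hnet, hφ.netFlow_source, hst]
    · classical
      set A := T.filter (ReflTransGen (fun u v => φ u v < c u v) s)
      have hsA : s ∈ A := mem_filter.2 ⟨hs, .refl⟩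
      have htA : t ∉ A := fun h => hreach (mem_filter.1 h).2
      have hsat : ∀ u ∈ A, ∀ v ∈ T \ A, (c u v : ℤ) ≤ φ u v := by
        intro u hu v hv
        by_contra hlt
        simp only [A, mem_sdiff, mem_filter] at hu hv
        exact hv.2 ⟨hv.1, hu.2.tail (not_le.1 hlt)⟩
      have hle : ((∑ u ∈ A, ∑ v ∈ T \ A, c u v : ℕ) : ℤ) ≤ r := by
        push_cast
        rw [← hφ.sum_cut (filter_subset _ _) hsA htA]
        exact sum_le_sum fun u hu => sum_le_sum fun v hv => hsat u hu v hv
      have := hcut A (filter_subset _ _) hsA htA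
      omega

end Flow

section Orientation

variable {V : Type*}

def IsOrientation (X : Finset (Sym2 V)) (D : Finset (V × V)) : Prop :=
  (∀ p ∈ D, s(p.1, p.2) ∈ X) ∧ ∀ e ∈ X, ∃! p : V × V, p ∈ D ∧ s(p.1, p.2) = e

theorem isOrientation_image [DecidableEq V] (X : Finset (Sym2 V)) {o : Sym2 V → V × V}
    (ho : ∀ e, s((o e).1, (o e).2) = e) : IsOrientation X (X.image o) := by
  refine ⟨?_, fun e he => ⟨o e, ⟨mem_image_of_mem o he, ho e⟩, ?_⟩⟩
  · intro p hp
    obtain ⟨e, he, rfl⟩ := mem_image.1 hp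
    rwa [ho]
  · rintro p ⟨hp, rfl⟩
    obtain ⟨e, -, rfl⟩ := mem_image.1 hp
    rw [ho]

noncomputable def orientAlong (φ : V → V → ℤ) (e : Sym2 V) : V × V :=
  if 0 ≤ φ e.out.1 e.out.2 then e.out else e.out.swap

theorem mk_orientAlong (φ : V → V → ℤ) (e : Sym2 V) :
    s((orientAlong φ e).1, (orientAlong φ e).2) = e := by
  unfold orientAlong
  split_ifs
  · exact e.out_eq
  · rw [Prod.fst_swap, Prod.snd_swap, Sym2.eq_swap]
    exact e.out_eq

theorem orientAlong_mk_of_pos {φ : V → V → ℤ} (hskew : ∀ u v, φ v u = -φ u v) {u v : V}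
    (h : 0 < φ u v) : orientAlong φ s(u, v) = (u, v) := by
  have hout : s((s(u, v)).out.1, (s(u, v)).out.2) = s(u, v) := Quot.out_eq _
  unfold orientAlong
  rcases (Sym2.mk_eq_mk_iff (q := (u, v))).1 hout with hout | hout <;> rw [hout]
  · simp [h.le]
  · simp [hskew u v, h]

theorem injOn_sym2Mk_of_disjoint [DecidableEq V] {A B : Finset V} (hAB : Disjoint A B) :
    Set.InjOn (fun p : V × V => s(p.1, p.2)) (A ×ˢ B : Finset (V × V)) := by
  rintro ⟨a, b⟩ hab ⟨a', b'⟩ hab' h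
  simp only [coe_product, Set.mem_prod, mem_coe] at hab hab'
  rcases Sym2.eq_iff.1 h with ⟨rfl, rfl⟩ | ⟨rfl, -⟩
  · rfl
  · exact absurd hab'.2 (disjoint_left.1 hAB hab.1)

end Orientation

section FaultTolerantPath

variable {V : Type*} [DecidableEq V] {X M : Finset (Sym2 V)} {s t : V} {k : ℕ}

def ftpCapacity (X M : Finset (Sym2 V)) (k : ℕ) (u v : V) : ℕ :=
  if s(u, v) ∈ X then if s(u, v) ∈ M then 1 else k + 1 else 0

theorem mem_of_ftpCapacity_pos {u v : V} (h : 0 < ftpCapacity X M k u v) : s(u, v) ∈ X := by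
  by_contra hX
  simp [ftpCapacity, hX] at h

theorem ftpuFeasible.le_sum_ftpCapacity (hfeas : ftpuFeasible X M s t k) {T A : Finset V}
    (hT : ∀ e ∈ X, ∀ v ∈ e, v ∈ T) (hsA : s ∈ A) (htA : t ∉ A) :
    k + 1 ≤ ∑ u ∈ A, ∑ v ∈ T \ A, ftpCapacity X M k u v := by
  by_contra! hcut
  set cross := (A ×ˢ (T \ A)).filter fun p => s(p.1, p.2) ∈ X
  have hsum : ∑ p ∈ cross, ftpCapacity X M k p.1 p.2 ≤ k := by
    rw [← sum_product'] at hcut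
    exact (sum_le_sum_of_subset (filter_subset _ _)).trans (Nat.le_of_lt_succ hcut)
  have hF : cross.image (fun p => s(p.1, p.2)) ⊆ M := by
    simp only [image_subset_iff]
    intro p hp
    by_contra hM
    have := (single_le_sum (fun _ _ => Nat.zero_le _) hp).trans hsum
    simp [ftpCapacity, (mem_filter.1 hp).2, hM] at this
  have hcard : (cross.image fun p => s(p.1, p.2)).card ≤ k := by
    refine card_image_le.trans (le_trans ?_ hsum)
    rw [card_eq_sum_ones]
    refine sum_le_sum fun p hp => ?_
    simp only [ftpCapacity, (mem_filter.1 hp).2, if_true]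
    split_ifs <;> omega
  obtain ⟨x, y, hx, hy, hxy⟩ := (hfeas _ hF hcard).exists_rel_of_not (· ∈ A) hsA htA
  obtain ⟨hxyX, hxyF⟩ := mem_sdiff.1 hxy
  exact hxyF (mem_image_of_mem _ (mem_filter.2
    ⟨mem_product.2 ⟨hx, mem_sdiff.2 ⟨hT _ hxyX y (Sym2.mem_mk_right x y), hy⟩⟩, hxyX⟩))

theorem IsSTFlow.reachable_orientAlong {T : Finset V} {F : Finset (Sym2 V)} {φ : V → V → ℤ}
    (hφ : IsSTFlow T (ftpCapacity X M k) s t (k + 1) φ) (hs : s ∈ T) (hFM : F ⊆ M)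
    (hFk : F.card ≤ k) :
    ReflTransGen (fun x y => (x, y) ∈ X.image (orientAlong φ) ∧ s(x, y) ∉ F) s t := by
  classical
  by_contra hreach
  set A := T.filter (ReflTransGen (fun x y => (x, y) ∈ X.image (orientAlong φ) ∧ s(x, y) ∉ F) s)
  have hcross : ∀ u ∈ A, ∀ v ∈ T \ A, 0 < φ u v → s(u, v) ∈ F ∧ φ u v ≤ 1 := by
    intro u hu v hv hpos
    have hX := mem_of_ftpCapacity_pos (Int.natCast_pos.1 (hpos.trans_le (hφ.le_cap u v)))
    have harc : (u, v) ∈ X.image (orientAlong φ) :=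
      mem_image.2 ⟨_, hX, orientAlong_mk_of_pos hφ.skew hpos⟩
    simp only [A, mem_sdiff, mem_filter] at hu hv
    have hF : s(u, v) ∈ F := by
      by_contra hF
      exact hv.2 ⟨hv.1, hu.2.tail ⟨harc, hF⟩⟩
    refine ⟨hF, ?_⟩
    simpa [ftpCapacity, hX, hFM hF] using hφ.le_cap u v
  have hvalue := hφ.sum_cut (A := A) (filter_subset _ T) (mem_filter.2 ⟨hs, .refl⟩)
    (fun h => hreach (mem_filter.1 h).2)
  have hle : ∑ u ∈ A, ∑ v ∈ T \ A, φ u v ≤ #{p ∈ A ×ˢ (T \ A) | 0 < φ p.1 p.2} := by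
    rw [natCast_card_filter, ← sum_product']
    refine sum_le_sum fun p hp => ?_
    split_ifs with hpos
    · exact (hcross p.1 (mem_product.1 hp).1 p.2 (mem_product.1 hp).2 hpos).2
    · exact not_lt.1 hpos
  have hinj : #{p ∈ A ×ˢ (T \ A) | 0 < φ p.1 p.2} ≤ F.card := by
    refine card_le_card_of_injOn _ (fun p hp => ?_)
      ((injOn_sym2Mk_of_disjoint disjoint_sdiff).mono (coe_subset.2 (filter_subset _ _)))
    obtain ⟨hp, hpos⟩ := mem_filter.1 hp
    exact (hcross p.1 (mem_product.1 hp).1 p.2 (mem_product.1 hp).2 hpos).1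
  omega

end FaultTolerantPath

theorem stmt0_general {V : Type*} [DecidableEq V] (X M : Finset (Sym2 V)) (s t : V) (k : ℕ)
    (hfeas : ftpuFeasible X M s t k) :
    ∃ D : Finset (V × V),
      (∀ p ∈ D, Sym2.mk p.1 p.2 ∈ X) ∧
      (∀ e ∈ X, ∃! p : V × V, p ∈ D ∧ Sym2.mk p.1 p.2 = e) ∧
      ∀ F ⊆ M, F.card ≤ k →
        Relation.ReflTransGen (fun x y => (x, y) ∈ D ∧ Sym2.mk x y ∉ F) s t := by
  by_cases hst : s = t
  · obtain ⟨hD, hunique⟩ := isOrientation_image X (mk_orientAlong 0)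
    exact ⟨_, hD, hunique, fun _ _ _ => hst ▸ .refl⟩
  set T := insert s (X.biUnion Sym2.toFinset)
  have hT : ∀ e ∈ X, ∀ v ∈ e, v ∈ T := fun e he v hv =>
    mem_insert_of_mem (mem_biUnion.2 ⟨e, he, Sym2.mem_toFinset.2 hv⟩)
  have hc : ∀ u v, 0 < ftpCapacity X M k u v → u ∈ T ∧ v ∈ T := fun u v h =>
    ⟨hT _ (mem_of_ftpCapacity_pos h) u (Sym2.mem_mk_left u v),
      hT _ (mem_of_ftpCapacity_pos h) v (Sym2.mem_mk_right u v)⟩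
  obtain ⟨φ, hφ⟩ := exists_isSTFlow hc (mem_insert_self s _) hst (k + 1)
    fun A _ hsA htA => hfeas.le_sum_ftpCapacity hT hsA htA
  obtain ⟨hD, hunique⟩ := isOrientation_image X (mk_orientAlong φ)
  exact ⟨_, hD, hunique, fun F hFM hFk => hφ.reachable_orientAlong (mem_insert_self s _) hFM hFk⟩

/-- If `X` is feasible for undirected FTP, then there is an orientation `D` of `X`
(each edge of `X` receives exactly one of its two directions) such that for every
`F ⊆ M` with `|F| ≤ k`, the digraph consisting of the arcs of `D` whose underlying
edge is not in `F` contains a directed `s`-`t` path. -/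
theorem stmt0 {V : Type*} [DecidableEq V] (E X M : Finset (Sym2 V)) (s t : V) (k : ℕ)
    (hXE : X ⊆ E) (hME : M ⊆ E)
    (hfeas : ftpuFeasible X M s t k) :
    ∃ D : Finset (V × V),
      (∀ p ∈ D, Sym2.mk p.1 p.2 ∈ X) ∧
      (∀ e ∈ X, ∃! p : V × V, p ∈ D ∧ Sym2.mk p.1 p.2 = e) ∧
      ∀ F ⊆ M, F.card ≤ k →
        Relation.ReflTransGen (fun x y => (x, y) ∈ D ∧ Sym2.mk x y ∉ F) s t :=
  stmt0_general X M s t k hfeas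
end

section
/- Let D = (V,A) be a directed graph, s,t ∈ V, M ⊆ A, k ≥ 0, and let S ⊆ A. If for every vertex set V' ⊆ V with s ∈ V' and t ∉ V' the cut δ⁺(V') ∩ S either contains at least one safe arc or contains at least k+1 arcs, then S is a feasible FTP solution, i.e., for every F ⊆ M with |F| ≤ k the graph (V, S∖F) contains a directed s-t path. -/
/-!
If deleting `F` separates `t` from `s`, the set of vertices reachable from `s` in `S \ F` is an
`s`-`t` cut all of whose `S`-arcs lie in `F ⊆ M`: it has no safe arc and at most `|F| ≤ k` arcs.
-/

/-- `cutArcs S V'` is `δ⁺(V') ∩ S`: the arcs of `S` with tail in `V'` and head outside `V'`. -/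
def cutArcs {V : Type*} [DecidableEq V] (S : Finset (V × V)) (V' : Finset V) :
    Finset (V × V) :=
  S.filter (fun e => e.1 ∈ V' ∧ e.2 ∉ V')

/-- Feasibility for Fault-Tolerant Path: for every `F ⊆ M` with `|F| ≤ k`,
the digraph `(V, S \ F)` contains a directed `s`-`t` path. -/
def ftpFeasible {V : Type*} [DecidableEq V] (S M : Finset (V × V)) (s t : V) (k : ℕ) : Prop :=
  ∀ F ⊆ M, F.card ≤ k → Relation.ReflTransGen (fun x y => (x, y) ∈ S \ F) s t

section Reachability

variable {V : Type*} [DecidableEq V]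

open scoped Classical in
/-- Every vertex other than `s` reachable from `s` is the head of an arc, so the reachable set is
cut out of `insert s (E.image Prod.snd)` and needs no `Fintype V`. -/
noncomputable def reachableFrom (E : Finset (V × V)) (s : V) : Finset V :=
  insert s ((E.image Prod.snd).filter (Relation.ReflTransGen (fun x y => (x, y) ∈ E) s))

theorem mem_reachableFrom {E : Finset (V × V)} {s v : V} :
    v ∈ reachableFrom E s ↔ Relation.ReflTransGen (fun x y => (x, y) ∈ E) s v := by
  simp only [reachableFrom, Finset.mem_insert, Finset.mem_filter, Finset.mem_image]
  constructor
  · rintro (rfl | ⟨-, hsv⟩)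
    exacts [.refl, hsv]
  · intro hsv
    rcases Relation.ReflTransGen.cases_tail hsv with rfl | ⟨u, -, huv⟩
    · exact Or.inl rfl
    · exact Or.inr ⟨⟨(u, v), huv, rfl⟩, hsv⟩

theorem cutArcs_reachableFrom_sdiff_subset (S F : Finset (V × V)) (s : V) :
    cutArcs S (reachableFrom (S \ F) s) ⊆ F := by
  intro e he
  obtain ⟨heS, htail, hhead⟩ := Finset.mem_filter.1 he
  by_contra heF
  exact hhead <| mem_reachableFrom.2 <|
    (mem_reachableFrom.1 htail).tail (Finset.mem_sdiff.2 ⟨heS, heF⟩)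

end Reachability

theorem stmt2_general {V : Type*} [DecidableEq V] (S M : Finset (V × V)) (s t : V) (k : ℕ)
    (hcut : ∀ V' : Finset V, s ∈ V' → t ∉ V' →
      (∃ e ∈ cutArcs S V', e ∉ M) ∨ k + 1 ≤ (cutArcs S V').card) :
    ftpFeasible S M s t k := by
  intro F hFM hFk
  by_contra hst
  have hcutF := cutArcs_reachableFrom_sdiff_subset S F s
  rcases hcut (reachableFrom (S \ F) s) (mem_reachableFrom.2 .refl)
      (mt mem_reachableFrom.1 hst) with ⟨e, he, heM⟩ | hcard
  · exact heM (hFM (hcutF he))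
  · have := (Finset.card_le_card hcutF).trans hFk
    omega

/-- If every `s`-`t` cut of `(V, S)` contains at least one safe arc or at least `k + 1`
arcs, then `S` is a feasible FTP solution. -/
theorem stmt2 {V : Type*} [Fintype V] [DecidableEq V] (A S M : Finset (V × V)) (s t : V)
    (k : ℕ) (hSA : S ⊆ A) (hMA : M ⊆ A)
    (hcut : ∀ V' : Finset V, s ∈ V' → t ∉ V' →
      (∃ e ∈ cutArcs S V', e ∉ M) ∨ k + 1 ≤ (cutArcs S V').card) :
    ftpFeasible S M s t k :=
  stmt2_general S M s t k hcut
end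

section
/- Let D = (V,A) be a directed graph, s,t ∈ V, and M ⊆ A. Every feasible FTP solution S* for k = 1 contains a robust s-t bipath: there exist directed s-t paths P₁, P₂ with arc sets P₁, P₂ ⊆ S* such that P₁ ∩ P₂ ∩ M = ∅. -/
/-- `P` is the arc set of a directed `s`-`t` path: there is a list of distinct vertices
starting at `s` and ending at `t` whose set of consecutive pairs is exactly `P`. -/
def IsPathArcs {V : Type*} [DecidableEq V] (s t : V) (P : Finset (V × V)) : Prop :=
  ∃ L : List V, L.head? = some s ∧ L.getLast? = some t ∧ L.Nodup ∧
    P = (L.zip L.tail).toFinset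

namespace FaultTolerantPath

open Relation Finset

variable {V : Type*}

def Reach (T : Finset (V × V)) : V → V → Prop :=
  ReflTransGen fun x y => (x, y) ∈ T

def within (T : Finset (V × V)) (Z : V → Prop) [DecidablePred Z] : Finset (V × V) :=
  T.filter fun a => Z a.1 ∧ Z a.2

def Leaves (Z : V → Prop) (a : V × V) : Prop :=
  Z a.1 ∧ ¬ Z a.2

section within

variable {T : Finset (V × V)} {Z : V → Prop} [DecidablePred Z]

@[simp] theorem mem_within {a : V × V} : a ∈ within T Z ↔ a ∈ T ∧ Z a.1 ∧ Z a.2 :=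
  mem_filter

theorem within_subset : within T Z ⊆ T :=
  filter_subset _ _

theorem within_mono {E : Finset (V × V)} (h : T ⊆ E) : within T Z ⊆ within E Z :=
  filter_subset_filter _ h

theorem within_erase [DecidableEq V] (g : V × V) : within (T.erase g) Z = (within T Z).erase g :=
  filter_erase _ _ _

theorem fst_ne_of_mem_within_compl {v : V} {a : V × V} (hv : Z v)
    (ha : a ∈ within T (¬ Z ·)) : a.1 ≠ v :=
  fun h => (mem_within.1 ha).2.1 (h ▸ hv)

end within

theorem mem_zip_tail_append {l : List V} {x : V × V} (p : List V) (h : x ∈ l.zip l.tail) :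
    x ∈ (p ++ l).zip (p ++ l).tail := by
  induction p with
  | nil => exact h
  | cons a p ih =>
    rcases hp : p ++ l with _ | ⟨b, r⟩
    · simp [hp] at ih
    · rw [hp] at ih
      simp only [List.cons_append, hp, List.tail_cons, List.zip_cons_cons, List.mem_cons]
      exact Or.inr ih

namespace Reach

variable {T E : Finset (V × V)} {s t : V}

theorem mono (hTE : T ⊆ E) (h : Reach T s t) : Reach E s t :=
  ReflTransGen.mono (fun _ _ hxy => hTE hxy) _ _ h

theorem head {x : V} (hx : (s, x) ∈ T) (h : Reach T x t) : Reach T s t :=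
  ReflTransGen.head hx h

theorem trans {u : V} (h₁ : Reach T s u) (h₂ : Reach T u t) : Reach T s t :=
  ReflTransGen.trans h₁ h₂

theorem through [DecidableEq V] {U O : Finset (V × V)} {c : V × V} (hU : Reach U s c.1)
    (hO : Reach O c.2 t) :
    Reach (U ∪ {c} ∪ O) s t :=
  (hU.mono (by grind)).trans (head (by simp) (hO.mono (by grind)))

variable {Z : V → Prop} [DecidablePred Z]

theorem mem_of_within (h : Reach (within T Z) s t) (hs : Z s) : Z t := by
  induction h with
  | refl => exact hs
  | tail _ hbc _ => exact (mem_within.1 hbc).2.2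

theorem within_or_exists_leaves (h : Reach T s t) (hs : Z s) :
    Reach (within T Z) s t ∨ ∃ a ∈ T, Leaves Z a ∧ Reach (within T Z) s a.1 := by
  induction h with
  | refl => exact Or.inl ReflTransGen.refl
  | @tail b c _ hbc ih =>
    rcases ih with hb | hexit
    · by_cases hc : Z c
      · exact Or.inl (hb.tail (mem_within.2 ⟨hbc, hb.mem_of_within hs, hc⟩))
      · exact Or.inr ⟨(b, c), hbc, ⟨hb.mem_of_within hs, hc⟩, hb⟩
    · exact Or.inr hexit

theorem exists_leaves_reach_within (h : Reach T s t) (hs : Z s) (ht : ¬ Z t) :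
    ∃ a ∈ T, Leaves Z a ∧ Reach (within T Z) s a.1 :=
  (h.within_or_exists_leaves hs).resolve_left fun h' => ht (h'.mem_of_within hs)

theorem exists_leaves_reach_within_compl (h : Reach T s t) (hs : Z s) (ht : ¬ Z t) :
    ∃ a ∈ T, Leaves Z a ∧ Reach (within T (¬ Z ·)) a.2 t := by
  induction h with
  | refl => exact absurd hs ht
  | @tail b c _ hbc ih =>
    by_cases hb : Z b
    · exact ⟨(b, c), hbc, ⟨hb, ht⟩, ReflTransGen.refl⟩
    · obtain ⟨a, ha, hla, hr⟩ := ih hb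
      exact ⟨a, ha, hla, hr.tail (mem_within.2 ⟨hbc, hb, ht⟩)⟩

theorem exists_isPathArcs [DecidableEq V] (h : Reach T s t) : ∃ Q ⊆ T, IsPathArcs s t Q := by
  induction h using ReflTransGen.head_induction_on with
  | refl => exact ⟨_, by simp, [t], rfl, rfl, List.nodup_singleton t, rfl⟩
  | @head a c hac _ ih =>
    obtain ⟨Q, hQT, L, hL₁, hL₂, hL, rfl⟩ := ih
    by_cases ha : a ∈ L
    · obtain ⟨p, q, rfl⟩ := List.append_of_mem ha
      refine ⟨_, fun x hx => hQT ?_, a :: q, rfl, by simpa [List.getLast?_append] using hL₂,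
        hL.sublist (List.sublist_append_right _ _), rfl⟩
      simpa using mem_zip_tail_append p (by simpa using hx)
    · obtain ⟨r, rfl⟩ : ∃ r, L = c :: r := by
        cases L with
        | nil => simp at hL₁
        | cons c' r => exact ⟨r, by simpa using hL₁⟩
      refine ⟨insert (a, c) _, insert_subset hac hQT, a :: c :: r, rfl,
        by rwa [List.getLast?_cons_cons], List.nodup_cons.2 ⟨ha, hL⟩, by simp⟩

theorem exists_subset_single_arc_from [DecidableEq V] (h : Reach T s t) :
    ∃ P ⊆ T, Reach P s t ∧ ∀ a ∈ P, ∀ b ∈ P, a.1 = s → b.1 = s → a = b := by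
  by_cases hts : t = s
  · exact ⟨∅, empty_subset _, hts ▸ ReflTransGen.refl, by simp⟩
  obtain ⟨a, haT, has, hr⟩ := h.exists_leaves_reach_within_compl (Z := (· = s)) rfl hts
  refine ⟨insert a (within T (¬ · = s)), insert_subset haT within_subset,
    Reach.head (by rw [← has.1]; exact mem_insert_self _ _) (hr.mono (subset_insert _ _)), ?_⟩
  simp only [mem_insert, mem_within]
  rintro b (rfl | ⟨-, hb, -⟩) b' (rfl | ⟨-, hb', -⟩) hbs hb's <;> simp_all

end Reach

theorem notMem_of_leaves_reach {D : Finset (V × V)} {s : V} {a : V × V}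
    (ha : Leaves (Reach D s) a) : a ∉ D :=
  fun haD => ha.2 (ha.1.tail haD)

structure IsTwoArcCut (T M : Finset (V × V)) (s t₁ t₂ : V) (Y : V → Prop) (c₁ c₂ : V × V) :
    Prop where
  source : Y s
  not_sink₁ : ¬ Y t₁
  not_sink₂ : ¬ Y t₂
  mem₁ : c₁ ∈ M
  mem₂ : c₂ ∈ M
  leaves : ∀ a ∈ T, Leaves Y a → a = c₁ ∨ a = c₂

namespace IsTwoArcCut

variable {T M : Finset (V × V)} {s t₁ t₂ : V} {Y : V → Prop} {c₁ c₂ : V × V}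

theorem symm (hY : IsTwoArcCut T M s t₁ t₂ Y c₁ c₂) : IsTwoArcCut T M s t₁ t₂ Y c₂ c₁ :=
  ⟨hY.source, hY.not_sink₁, hY.not_sink₂, hY.mem₂, hY.mem₁,
    fun a ha hla => (hY.leaves a ha hla).symm⟩

theorem exists_reach_outside [DecidablePred Y] (hY : IsTwoArcCut T M s t₁ t₂ Y c₁ c₂)
    {E : Finset (V × V)} {t : V} (hE : E ⊆ T) (h : Reach E s t) (ht : ¬ Y t) :
    ∃ a ∈ E, (a = c₁ ∨ a = c₂) ∧ Reach (within E (¬ Y ·)) a.2 t :=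
  let ⟨a, ha, hla, hr⟩ := h.exists_leaves_reach_within_compl hY.source ht
  ⟨a, ha, hY.leaves a (hE ha) hla, hr⟩

end IsTwoArcCut

section FaultTolerance

variable [DecidableEq V]

def FaultTolerant (T M : Finset (V × V)) (s t₁ t₂ : V) : Prop :=
  Reach T s t₁ ∧ Reach T s t₂ ∧ ∀ g ∈ M, Reach (T.erase g) s t₁ ∨ Reach (T.erase g) s t₂

def HasRobustBipath (T M : Finset (V × V)) (s₁ s₂ t₁ t₂ : V) : Prop :=
  ∃ P₁ ⊆ T, ∃ P₂ ⊆ T, Reach P₁ s₁ t₁ ∧ Reach P₂ s₂ t₂ ∧ P₁ ∩ P₂ ∩ M = ∅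

def RobustBelow (V : Type*) [DecidableEq V] (n : ℕ) : Prop :=
  ∀ T M : Finset (V × V), ∀ s t₁ t₂ : V,
    T.card < n → FaultTolerant T M s t₁ t₂ → HasRobustBipath T M s s t₁ t₂

variable {T M : Finset (V × V)} {s t₁ t₂ : V}

theorem FaultTolerant.symm (h : FaultTolerant T M s t₁ t₂) : FaultTolerant T M s t₂ t₁ :=
  ⟨h.2.1, h.1, fun g hg => (h.2.2 g hg).symm⟩

theorem HasRobustBipath.symm {s₁ s₂ : V} (h : HasRobustBipath T M s₁ s₂ t₁ t₂) :
    HasRobustBipath T M s₂ s₁ t₂ t₁ := by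
  obtain ⟨P₁, hP₁, P₂, hP₂, r₁, r₂, hP⟩ := h
  exact ⟨P₂, hP₂, P₁, hP₁, r₂, r₁, by rwa [inter_comm P₂]⟩

theorem HasRobustBipath.mono {E : Finset (V × V)} {s₁ s₂ : V}
    (h : HasRobustBipath T M s₁ s₂ t₁ t₂) (hTE : T ⊆ E) : HasRobustBipath E M s₁ s₂ t₁ t₂ := by
  obtain ⟨P₁, hP₁, P₂, hP₂, hP⟩ := h
  exact ⟨P₁, hP₁.trans hTE, P₂, hP₂.trans hTE, hP⟩

theorem faultTolerant_of_ftpFeasible {S M : Finset (V × V)} {s t : V}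
    (h : ftpFeasible S M s t 1) : FaultTolerant S M s t t := by
  have hS : Reach S s t := by
    have := h ∅ (empty_subset _) (by simp)
    rwa [sdiff_empty] at this
  refine ⟨hS, hS, fun g hg => Or.inl ?_⟩
  have := h {g} (singleton_subset_iff.2 hg) (by simp)
  rwa [sdiff_singleton_eq_erase] at this

theorem hasRobustBipath_of_forall_fst_eq (hT : FaultTolerant T M s t₁ t₂)
    (hM : ∀ g ∈ M, g ∈ T → g.1 = s) : HasRobustBipath T M s s t₁ t₂ := by
  obtain ⟨h₁, h₂, hM'⟩ := hT
  have key : ∀ {P Q : Finset (V × V)} {g : V × V}, P ⊆ T →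
      (∀ a ∈ Q, ∀ b ∈ Q, a.1 = s → b.1 = s → a = b) → g ∈ Q → g.1 = s → g ∉ P →
      P ∩ Q ∩ M = ∅ := by
    intro P Q g hPT hQ hgQ hgs hgP
    refine eq_empty_of_forall_notMem fun x hx => ?_
    simp only [mem_inter] at hx
    obtain ⟨⟨hxP, hxQ⟩, hxM⟩ := hx
    exact hgP (hQ x hxQ g hgQ (hM x hxM (hPT hxP)) hgs ▸ hxP)
  obtain ⟨P₁, hP₁, r₁, u₁⟩ := h₁.exists_subset_single_arc_from
  obtain ⟨P₂, hP₂, r₂, u₂⟩ := h₂.exists_subset_single_arc_from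
  by_cases hP : P₁ ∩ P₂ ∩ M = ∅
  · exact ⟨P₁, hP₁, P₂, hP₂, r₁, r₂, hP⟩
  obtain ⟨g, hg⟩ := nonempty_iff_ne_empty.2 hP
  simp only [mem_inter] at hg
  obtain ⟨⟨hg₁, hg₂⟩, hgM⟩ := hg
  have hgs := hM g hgM (hP₁ hg₁)
  rcases hM' g hgM with h | h
  · obtain ⟨Q, hQ, r, -⟩ := h.exists_subset_single_arc_from
    exact ⟨Q, hQ.trans (erase_subset _ _), P₂, hP₂, r, r₂,
      key (hQ.trans (erase_subset _ _)) u₂ hg₂ hgs fun hgQ => by simpa using hQ hgQ⟩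
  · obtain ⟨Q, hQ, r, -⟩ := h.exists_subset_single_arc_from
    refine ⟨P₁, hP₁, Q, hQ.trans (erase_subset _ _), r₁, r, ?_⟩
    rw [inter_comm P₁]
    exact key (hQ.trans (erase_subset _ _)) u₁ hg₁ hgs fun hgQ => by simpa using hQ hgQ

/-- `T` with `Y` contracted to `s`; of the arcs touching `Y` only the cut arcs `c₁`, `c₂` are kept,
as `(s, c₁.2)` and `(s, c₂.2)`. -/
def contraction (T : Finset (V × V)) (Y : V → Prop) [DecidablePred Y] (s : V) (c₁ c₂ : V × V) :
    Finset (V × V) :=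
  insert (s, c₁.2) (insert (s, c₂.2) (within T (¬ Y ·)))

section Cut

variable {Y : V → Prop} [DecidablePred Y]

section contraction

variable {c₁ c₂ a : V × V}

theorem subset_contraction : within T (¬ Y ·) ⊆ contraction T Y s c₁ c₂ :=
  (subset_insert _ _).trans (subset_insert _ _)

theorem mk_mem_contraction (ha : a = c₁ ∨ a = c₂) : (s, a.2) ∈ contraction T Y s c₁ c₂ := by
  rcases ha with rfl | rfl <;> simp [contraction]

theorem mem_within_compl_of_mem_contraction (ha : a ∈ contraction T Y s c₁ c₂) (has : a.1 ≠ s) :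
    a ∈ within T (¬ Y ·) := by
  simp only [contraction, mem_insert] at ha
  rcases ha with rfl | rfl | ha
  exacts [absurd rfl has, absurd rfl has, ha]

end contraction

theorem hasRobustBipath_of_single_cut {c : V × V} (IH : RobustBelow V T.card)
    (hT : FaultTolerant T M s t₁ t₂) (hs : Y s) (ht₁ : ¬ Y t₁) (hc : c ∈ M)
    (hcut : ∀ a ∈ T, Leaves Y a → a = c) : HasRobustBipath T M s s t₁ t₂ := by
  obtain ⟨h₁, -, hM⟩ := hT
  obtain ⟨hcT, hcY, hin⟩ : c ∈ T ∧ Leaves Y c ∧ Reach (within T Y) s c.1 := by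
    obtain ⟨a, haT, hla, hr⟩ := h₁.exists_leaves_reach_within hs ht₁
    obtain rfl := hcut a haT hla
    exact ⟨haT, hla, hr⟩
  have hout : Reach (within T (¬ Y ·)) c.2 t₁ := by
    obtain ⟨a, haT, hla, hr⟩ := h₁.exists_leaves_reach_within_compl hs ht₁
    rwa [hcut a haT hla] at hr
  have inner : ∀ g ∈ M,
      (Reach ((within T Y).erase g) s c.1 ∧ c ≠ g) ∨ Reach ((within T Y).erase g) s t₂ := by
    intro g hg
    rw [← within_erase]
    rcases hM g hg with h | h
    · obtain ⟨a, ha, hla, hr⟩ := h.exists_leaves_reach_within hs ht₁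
      obtain rfl := hcut a (mem_of_mem_erase ha) hla
      exact Or.inl ⟨hr, ne_of_mem_erase ha⟩
    · rcases h.within_or_exists_leaves hs with hr | ⟨a, ha, hla, hr⟩
      · exact Or.inr hr
      · obtain rfl := hcut a (mem_of_mem_erase ha) hla
        exact Or.inl ⟨hr, ne_of_mem_erase ha⟩
  have hinner : FaultTolerant (within T Y) M s c.1 t₂ :=
    ⟨hin, ((inner c hc).resolve_left fun h => h.2 rfl).mono (erase_subset _ _),
      fun g hg => (inner g hg).imp_left And.left⟩
  have hcard : (within T Y).card < T.card :=
    card_lt_card ⟨within_subset, fun h => hcY.2 (mem_within.1 (h hcT)).2.2⟩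
  obtain ⟨U₁, hU₁, U₂, hU₂, r₁, r₂, hU⟩ := IH _ _ _ _ _ hcard hinner
  refine ⟨U₁ ∪ {c} ∪ within T (¬ Y ·), ?_, U₂, hU₂.trans within_subset, r₁.through hout, r₂, ?_⟩
  · exact union_subset (union_subset (hU₁.trans within_subset) (singleton_subset_iff.2 hcT))
      within_subset
  · refine eq_empty_of_forall_notMem fun x hx => ?_
    simp only [mem_inter, mem_union, mem_singleton] at hx
    obtain ⟨⟨(hx₁ | rfl) | hx₁, hx₂⟩, hxM⟩ := hx
    · simpa [hU] using mem_inter.2 ⟨mem_inter.2 ⟨hx₁, hx₂⟩, hxM⟩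
    · exact hcY.2 (mem_within.1 (hU₂ hx₂)).2.2
    · exact (mem_within.1 hx₁).2.1 (mem_within.1 (hU₂ hx₂)).2.1

theorem glue_inter_eq_empty {U₁ U₂ O₁ O₂ : Finset (V × V)} {d₁ d₂ : V × V}
    (hU₁ : U₁ ⊆ within T Y) (hU₂ : U₂ ⊆ within T Y)
    (hO₁ : O₁ ⊆ within T (¬ Y ·)) (hO₂ : O₂ ⊆ within T (¬ Y ·))
    (hd₁ : Leaves Y d₁) (hd₂ : Leaves Y d₂) (hd : d₁ ≠ d₂)
    (hU : U₁ ∩ U₂ ∩ M = ∅) (hO : O₁ ∩ O₂ ∩ M = ∅) :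
    (U₁ ∪ {d₁} ∪ O₁) ∩ (U₂ ∪ {d₂} ∪ O₂) ∩ M = ∅ := by
  refine eq_empty_of_forall_notMem fun x hx => ?_
  simp only [mem_inter, mem_union, mem_singleton] at hx
  have hUM : x ∈ U₁ → x ∈ U₂ → x ∉ M := fun h₁ h₂ hM => by
    simpa [hU] using mem_inter.2 ⟨mem_inter.2 ⟨h₁, h₂⟩, hM⟩
  have hOM : x ∈ O₁ → x ∈ O₂ → x ∉ M := fun h₁ h₂ hM => by
    simpa [hO] using mem_inter.2 ⟨mem_inter.2 ⟨h₁, h₂⟩, hM⟩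
  have hxU₁ := fun h : x ∈ U₁ => (mem_within.1 (hU₁ h)).2
  have hxU₂ := fun h : x ∈ U₂ => (mem_within.1 (hU₂ h)).2
  have hxO₁ := fun h : x ∈ O₁ => (mem_within.1 (hO₁ h)).2
  have hxO₂ := fun h : x ∈ O₂ => (mem_within.1 (hO₂ h)).2
  unfold Leaves at hd₁ hd₂
  grind

namespace IsTwoArcCut

variable {c₁ c₂ : V × V}

theorem exists_reach_inside (hY : IsTwoArcCut T M s t₁ t₂ Y c₁ c₂)
    (hT : FaultTolerant T M s t₁ t₂) {g : V × V} (hg : g ∈ M) :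
    ∃ a ∈ T.erase g, (a = c₁ ∨ a = c₂) ∧ Leaves Y a ∧ Reach ((within T Y).erase g) s a.1 := by
  rw [← within_erase]
  have exit : ∀ {t}, ¬ Y t → Reach (T.erase g) s t → ∃ a ∈ T.erase g,
      (a = c₁ ∨ a = c₂) ∧ Leaves Y a ∧ Reach (within (T.erase g) Y) s a.1 := fun ht h =>
    let ⟨a, ha, hla, hr⟩ := h.exists_leaves_reach_within hY.source ht
    ⟨a, ha, hY.leaves a (mem_of_mem_erase ha) hla, hla, hr⟩
  exact (hT.2.2 g hg).elim (exit hY.not_sink₁) (exit hY.not_sink₂)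

theorem arc₁_spec (hY : IsTwoArcCut T M s t₁ t₂ Y c₁ c₂) (hT : FaultTolerant T M s t₁ t₂) :
    c₁ ∈ T ∧ Leaves Y c₁ ∧ Reach (within T Y) s c₁.1 := by
  obtain ⟨a, ha, hac | hac, hla, hr⟩ := hY.exists_reach_inside hT hY.mem₂
  · subst hac
    exact ⟨mem_of_mem_erase ha, hla, hr.mono (erase_subset _ _)⟩
  · exact absurd hac (ne_of_mem_erase ha)

theorem faultTolerant_within (hY : IsTwoArcCut T M s t₁ t₂ Y c₁ c₂)
    (hT : FaultTolerant T M s t₁ t₂) : FaultTolerant (within T Y) M s c₁.1 c₂.1 := by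
  refine ⟨(hY.arc₁_spec hT).2.2, (hY.symm.arc₁_spec hT).2.2, fun g hg => ?_⟩
  obtain ⟨a, -, rfl | rfl, -, hr⟩ := hY.exists_reach_inside hT hg
  exacts [Or.inl hr, Or.inr hr]

theorem exists_outer_of_snd_eq (hY : IsTwoArcCut T M s t₁ t₂ Y c₁ c₂)
    (IH : RobustBelow V T.card) (hT : FaultTolerant T M s t₁ t₂) (heq : c₁.2 = c₂.2) :
    HasRobustBipath (within T (¬ Y ·)) M c₁.2 c₂.2 t₁ t₂ := by
  have exit : ∀ {E t}, E ⊆ T → ¬ Y t → Reach E s t → Reach (within E (¬ Y ·)) c₁.2 t := by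
    intro E t hE ht h
    obtain ⟨a, -, rfl | rfl, hr⟩ := hY.exists_reach_outside hE h ht
    exacts [hr, heq ▸ hr]
  have hout : FaultTolerant (within T (¬ Y ·)) M c₁.2 t₁ t₂ := by
    refine ⟨exit subset_rfl hY.not_sink₁ hT.1, exit subset_rfl hY.not_sink₂ hT.2.1,
      fun g hg => ?_⟩
    rw [← within_erase]
    exact (hT.2.2 g hg).imp (exit (erase_subset _ _) hY.not_sink₁)
      (exit (erase_subset _ _) hY.not_sink₂)
  obtain ⟨hc₁T, hc₁, -⟩ := hY.arc₁_spec hT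
  have hcard : (within T (¬ Y ·)).card < T.card :=
    card_lt_card ⟨within_subset, fun h => (mem_within.1 (h hc₁T)).2.1 hc₁.1⟩
  obtain ⟨O₁, h₁, O₂, h₂, r₁, r₂, hO⟩ := IH _ _ _ _ _ hcard hout
  exact ⟨O₁, h₁, O₂, h₂, r₁, heq ▸ r₂, hO⟩

theorem faultTolerant_contraction (hY : IsTwoArcCut T M s t₁ t₂ Y c₁ c₂)
    (hT : FaultTolerant T M s t₁ t₂) (hne : c₁.2 ≠ c₂.2) :
    FaultTolerant (contraction T Y s c₁ c₂) (insert (s, c₁.2) (insert (s, c₂.2) M)) s t₁ t₂ := by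
  have enter : ∀ {t}, ¬ Y t → Reach T s t → Reach (contraction T Y s c₁ c₂) s t := by
    intro t ht h
    obtain ⟨a, -, hac, hr⟩ := hY.exists_reach_outside subset_rfl h ht
    exact Reach.head (mk_mem_contraction hac) (hr.mono subset_contraction)
  have reroute : ∀ {g ĝ : V × V}, ĝ ∈ M →
      (∀ a ∈ T.erase ĝ, (a = c₁ ∨ a = c₂) → (s, a.2) ≠ g) →
      within (T.erase ĝ) (¬ Y ·) ⊆ (within T (¬ Y ·)).erase g →
      Reach ((contraction T Y s c₁ c₂).erase g) s t₁ ∨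
        Reach ((contraction T Y s c₁ c₂).erase g) s t₂ := by
    intro g ĝ hĝ hg hsub
    have exit : ∀ {t}, ¬ Y t → Reach (T.erase ĝ) s t →
        Reach ((contraction T Y s c₁ c₂).erase g) s t := by
      intro t ht h
      obtain ⟨a, ha, hac, hr⟩ := hY.exists_reach_outside (erase_subset _ _) h ht
      exact Reach.head (mem_erase.2 ⟨hg a ha hac, mk_mem_contraction hac⟩)
        (hr.mono (hsub.trans (erase_subset_erase _ subset_contraction)))
    exact (hT.2.2 ĝ hĝ).imp (exit hY.not_sink₁) (exit hY.not_sink₂)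
  refine ⟨enter hY.not_sink₁ hT.1, enter hY.not_sink₂ hT.2.1, fun g hg => ?_⟩
  have hgO : ∀ {v} ĝ, g = (s, v) → within (T.erase ĝ) (¬ Y ·) ⊆ (within T (¬ Y ·)).erase g := by
    rintro v ĝ rfl
    rw [erase_eq_of_notMem fun h => fst_ne_of_mem_within_compl hY.source h rfl]
    exact within_mono (erase_subset _ _)
  by_cases h₁ : g = (s, c₁.2)
  · refine reroute hY.mem₁ (fun a ha hac hag => ?_) (hgO _ h₁)
    rcases hac with rfl | rfl
    · exact ne_of_mem_erase ha rfl
    · exact hne (Prod.mk.inj (hag.trans h₁)).2.symm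
  by_cases h₂ : g = (s, c₂.2)
  · refine reroute hY.mem₂ (fun a ha hac hag => ?_) (hgO _ h₂)
    rcases hac with rfl | rfl
    · exact hne (Prod.mk.inj (hag.trans h₂)).2
    · exact ne_of_mem_erase ha rfl
  have hgM : g ∈ M := by simpa [h₁, h₂] using hg
  refine reroute hgM (fun a _ hac hag => ?_) (within_erase g).subset
  rcases hac with rfl | rfl
  exacts [h₁ hag.symm, h₂ hag.symm]

/-- The arc of `T` entering `c₁.1 ≠ s` inside `Y` is lost in the contraction. -/
theorem card_contraction_lt (hY : IsTwoArcCut T M s t₁ t₂ Y c₁ c₂)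
    (hT : FaultTolerant T M s t₁ t₂) (hs : c₁.1 ≠ s) (hc : c₁ ≠ c₂) :
    (contraction T Y s c₁ c₂).card < T.card := by
  obtain ⟨hc₁T, hc₁, hin⟩ := hY.arc₁_spec hT
  obtain ⟨hc₂T, hc₂, -⟩ := hY.symm.arc₁_spec hT
  obtain ⟨e, heT, he₁, he₂⟩ : ∃ e ∈ T, Y e.1 ∧ e.2 = c₁.1 := by
    obtain ⟨b, -, hb⟩ := (ReflTransGen.cases_tail hin).resolve_left hs
    exact ⟨_, (mem_within.1 hb).1, (mem_within.1 hb).2.1, rfl⟩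
  set O := within T (¬ Y ·)
  have hc₂O : c₂ ∉ O := fun h => (mem_within.1 h).2.1 hc₂.1
  have hc₁O : c₁ ∉ insert c₂ O := by
    simp only [mem_insert, not_or]
    exact ⟨hc, fun h => (mem_within.1 h).2.1 hc₁.1⟩
  have heO : e ∉ insert c₁ (insert c₂ O) := by
    simp only [mem_insert, not_or]
    exact ⟨fun h => hc₁.2 (h ▸ he₂ ▸ hc₁.1), fun h => hc₂.2 (h ▸ he₂ ▸ hc₁.1),
      fun h => (mem_within.1 h).2.1 he₁⟩
  have hT := card_le_card (show insert e (insert c₁ (insert c₂ O)) ⊆ T by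
    simp [insert_subset_iff, heT, hc₁T, hc₂T, O, within_subset])
  rw [card_insert_of_notMem heO, card_insert_of_notMem hc₁O, card_insert_of_notMem hc₂O] at hT
  have : (contraction T Y s c₁ c₂).card ≤ (insert (s, c₂.2) O).card + 1 := card_insert_le _ _
  have := card_insert_le (s, c₂.2) O
  omega

theorem exists_reach_of_reach_contraction (hY : IsTwoArcCut T M s t₁ t₂ Y c₁ c₂)
    {L : Finset (V × V)} {t : V} (hL : L ⊆ contraction T Y s c₁ c₂) (h : Reach L s t)
    (ht : ¬ Y t) :
    ∃ a, (a = c₁ ∨ a = c₂) ∧ (s, a.2) ∈ L ∧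
      within L (¬ · = s) ⊆ within T (¬ Y ·) ∧ Reach (within L (¬ · = s)) a.2 t := by
  obtain ⟨b, hb, hbs, hr⟩ :=
    h.exists_leaves_reach_within_compl (Z := (· = s)) rfl fun h => ht (h ▸ hY.source)
  have hLO : within L (¬ · = s) ⊆ within T (¬ Y ·) := fun x hx =>
    mem_within_compl_of_mem_contraction (hL (mem_within.1 hx).1) (mem_within.1 hx).2.1
  have := hL hb
  simp only [contraction, mem_insert] at this
  rcases this with rfl | rfl | hbO
  exacts [⟨c₁, Or.inl rfl, hb, hLO, hr⟩, ⟨c₂, Or.inr rfl, hb, hLO, hr⟩,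
    absurd hbs.1 (fst_ne_of_mem_within_compl hY.source hbO)]

theorem exists_outer_of_snd_ne (hY : IsTwoArcCut T M s t₁ t₂ Y c₁ c₂)
    (IH : RobustBelow V T.card) (hT : FaultTolerant T M s t₁ t₂) (hs : c₁.1 ≠ s)
    (hne : c₁.2 ≠ c₂.2) :
    ∃ d₁ d₂, (d₁ = c₁ ∧ d₂ = c₂ ∨ d₁ = c₂ ∧ d₂ = c₁) ∧
      HasRobustBipath (within T (¬ Y ·)) M d₁.2 d₂.2 t₁ t₂ := by
  obtain ⟨L₁, hL₁, L₂, hL₂, r₁, r₂, hL⟩ := IH _ _ _ _ _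
    (hY.card_contraction_lt hT hs fun h => hne (h ▸ rfl)) (hY.faultTolerant_contraction hT hne)
  obtain ⟨a₁, ha₁, hs₁, hO₁, r₁⟩ := hY.exists_reach_of_reach_contraction hL₁ r₁ hY.not_sink₁
  obtain ⟨a₂, ha₂, hs₂, hO₂, r₂⟩ := hY.exists_reach_of_reach_contraction hL₂ r₂ hY.not_sink₂
  have ha : a₁ ≠ a₂ := by
    rintro rfl
    have : (s, a₁.2) ∈ insert (s, c₁.2) (insert (s, c₂.2) M) := by
      rcases ha₁ with rfl | rfl <;> simp
    simpa [hL] using mem_inter.2 ⟨mem_inter.2 ⟨hs₁, hs₂⟩, this⟩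
  refine ⟨a₁, a₂, ?_, _, hO₁, _, hO₂, r₁, r₂, subset_empty.1 (hL ▸ ?_)⟩
  · rcases ha₁ with rfl | rfl <;> rcases ha₂ with rfl | rfl <;> simp_all
  · exact inter_subset_inter (inter_subset_inter within_subset within_subset)
      ((subset_insert _ _).trans (subset_insert _ _))

theorem hasRobustBipath (hY : IsTwoArcCut T M s t₁ t₂ Y c₁ c₂) (IH : RobustBelow V T.card)
    (hT : FaultTolerant T M s t₁ t₂) (hs : c₁.1 ≠ s) (hc : c₁ ≠ c₂) :
    HasRobustBipath T M s s t₁ t₂ := by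
  obtain ⟨d₁, d₂, hd, O₁, hO₁, O₂, hO₂, r₁, r₂, hO⟩ : ∃ d₁ d₂,
      (d₁ = c₁ ∧ d₂ = c₂ ∨ d₁ = c₂ ∧ d₂ = c₁) ∧
      HasRobustBipath (within T (¬ Y ·)) M d₁.2 d₂.2 t₁ t₂ := by
    by_cases heq : c₁.2 = c₂.2
    · exact ⟨c₁, c₂, Or.inl ⟨rfl, rfl⟩, hY.exists_outer_of_snd_eq IH hT heq⟩
    · exact hY.exists_outer_of_snd_ne IH hT hs heq
  obtain ⟨hY, hd⟩ : IsTwoArcCut T M s t₁ t₂ Y d₁ d₂ ∧ d₁ ≠ d₂ := by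
    rcases hd with ⟨rfl, rfl⟩ | ⟨rfl, rfl⟩
    exacts [⟨hY, hc⟩, ⟨hY.symm, hc.symm⟩]
  obtain ⟨hd₁T, hd₁, -⟩ := hY.arc₁_spec hT
  obtain ⟨hd₂T, hd₂, -⟩ := hY.symm.arc₁_spec hT
  have hcard : (within T Y).card < T.card :=
    card_lt_card ⟨within_subset, fun h => hd₁.2 (mem_within.1 (h hd₁T)).2.2⟩
  obtain ⟨U₁, hU₁, U₂, hU₂, u₁, u₂, hU⟩ := IH _ _ _ _ _ hcard (hY.faultTolerant_within hT)
  refine ⟨U₁ ∪ {d₁} ∪ O₁, ?_, U₂ ∪ {d₂} ∪ O₂, ?_, u₁.through r₁, u₂.through r₂,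
    glue_inter_eq_empty hU₁ hU₂ hO₁ hO₂ hd₁ hd₂ hd hU hO⟩
  · exact union_subset (union_subset (hU₁.trans within_subset) (singleton_subset_iff.2 hd₁T))
      (hO₁.trans within_subset)
  · exact union_subset (union_subset (hU₂.trans within_subset) (singleton_subset_iff.2 hd₂T))
      (hO₂.trans within_subset)

end IsTwoArcCut

end Cut

theorem FaultTolerant.hasRobustBipath_of_robustBelow (IH : RobustBelow V T.card)
    (hT : FaultTolerant T M s t₁ t₂) : HasRobustBipath T M s s t₁ t₂ := by
  classical
  by_cases hex : ∃ f ∈ M, f ∈ T ∧ f.1 ≠ s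
  swap
  · push Not at hex
    exact hasRobustBipath_of_forall_fst_eq hT hex
  obtain ⟨f, hfM, hfT, hfs⟩ := hex
  by_cases hA : FaultTolerant (T.erase f) M s t₁ t₂
  · exact (IH _ _ _ _ _ (card_erase_lt_of_mem hfT) hA).mono (erase_subset _ _)
  have hcut : ∀ a ∈ T, Leaves (Reach (T.erase f) s) a → a = f := fun a ha hla => by
    by_contra hne
    exact notMem_of_leaves_reach hla (mem_erase.2 ⟨hne, ha⟩)
  by_cases h₁ : Reach (T.erase f) s t₁
  swap
  · exact hasRobustBipath_of_single_cut IH hT ReflTransGen.refl h₁ hfM hcut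
  by_cases h₂ : Reach (T.erase f) s t₂
  swap
  · exact (hasRobustBipath_of_single_cut IH hT.symm ReflTransGen.refl h₂ hfM hcut).symm
  obtain ⟨h, hhM, hd₁, hd₂⟩ : ∃ h ∈ M,
      ¬ Reach ((T.erase f).erase h) s t₁ ∧ ¬ Reach ((T.erase f).erase h) s t₂ := by
    simpa [FaultTolerant, h₁, h₂] using hA
  have hfh : f ≠ h := by
    rintro rfl
    exact hd₁ (by rwa [erase_idem])
  refine IsTwoArcCut.hasRobustBipath ⟨ReflTransGen.refl, hd₁, hd₂, hfM, hhM, fun a ha hla => ?_⟩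
    IH hT hfs hfh
  by_contra hne
  exact notMem_of_leaves_reach hla
    (mem_erase.2 ⟨fun h => hne (Or.inr h), mem_erase.2 ⟨fun h => hne (Or.inl h), ha⟩⟩)

theorem FaultTolerant.hasRobustBipath (hT : FaultTolerant T M s t₁ t₂) :
    HasRobustBipath T M s s t₁ t₂ := by
  have : ∀ n, RobustBelow V n := by
    intro n
    induction n with
    | zero => exact fun _ _ _ _ _ h => absurd h (Nat.not_lt_zero _)
    | succ n ih =>
      exact fun T M s t₁ t₂ hn hT => hT.hasRobustBipath_of_robustBelow
        fun T' M' s' t₁' t₂' hT' => ih T' M' s' t₁' t₂' (by omega)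
  exact this _ T M s t₁ t₂ (Nat.lt_succ_self _) hT

end FaultTolerance

end FaultTolerantPath

theorem stmt4_general {V : Type*} [DecidableEq V] (M Sstar : Finset (V × V)) (s t : V)
    (hfeas : ftpFeasible Sstar M s t 1) :
    ∃ P₁ P₂ : Finset (V × V), P₁ ⊆ Sstar ∧ P₂ ⊆ Sstar ∧
      IsPathArcs s t P₁ ∧ IsPathArcs s t P₂ ∧ P₁ ∩ P₂ ∩ M = ∅ := by
  obtain ⟨P₁, hP₁, P₂, hP₂, r₁, r₂, hP⟩ :=
    (FaultTolerantPath.faultTolerant_of_ftpFeasible hfeas).hasRobustBipath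
  obtain ⟨Q₁, hQ₁, hq₁⟩ := r₁.exists_isPathArcs
  obtain ⟨Q₂, hQ₂, hq₂⟩ := r₂.exists_isPathArcs
  refine ⟨Q₁, Q₂, hQ₁.trans hP₁, hQ₂.trans hP₂, hq₁, hq₂, Finset.subset_empty.1 ?_⟩
  exact hP ▸ Finset.inter_subset_inter (Finset.inter_subset_inter hQ₁ hQ₂) subset_rfl

/-- Every feasible FTP solution for `k = 1` contains a robust `s`-`t` bipath:
two directed `s`-`t` paths sharing no vulnerable arc. -/
theorem stmt4 {V : Type*} [DecidableEq V] (A M Sstar : Finset (V × V)) (s t : V)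
    (hMA : M ⊆ A) (hSA : Sstar ⊆ A)
    (hfeas : ftpFeasible Sstar M s t 1) :
    ∃ P₁ P₂ : Finset (V × V), P₁ ⊆ Sstar ∧ P₂ ⊆ Sstar ∧
      IsPathArcs s t P₁ ∧ IsPathArcs s t P₂ ∧ P₁ ∩ P₂ ∩ M = ∅ :=
  stmt4_general M Sstar s t hfeas
end

section
/- Let D = (V,A) be a directed graph, s ∈ V, T ⊆ V a set of terminals, and m ≤ |T| an integer. Form D' by adding a new vertex t and the arc set A' = {(u,t) : u ∈ T}, and set M = A' and k = m−1. Then for every S with A' ⊆ S ⊆ A ∪ A', the set S is a feasible FTP solution for the instance (D', s, t, M, m−1) if and only if there are at least m terminals u ∈ T such that (V, S ∩ A) contains a directed s-u path. -/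
/-!
Since the new sink `t` has no outgoing arcs, an `s`-`t` path in `D' - F` is an `s`-`u` path in
`(V, S ∩ A)` followed by an arc `(u, t)` not in `F`. Hence `S` is feasible iff the set `R` of
terminals reachable from `s` cannot be cut off by deleting `m - 1` of the arcs `(u, t)`, that is,
iff `|R| ≥ m`.
-/

namespace Relation

variable {α : Type*} {r : Option α → Option α → Prop}

theorem reflTransGen_some_some_iff (hsink : ∀ y, ¬ r none y) {a b : α} :
    ReflTransGen r (some a) (some b) ↔ ReflTransGen (fun x y => r (some x) (some y)) a b := by
  refine ⟨fun h => ?_, fun h => h.lift some fun _ _ => id⟩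
  generalize hb : some b = c at h
  induction h generalizing b with
  | refl => cases hb; exact .refl
  | @tail c _ _ hcb ih =>
    subst hb
    cases c with
    | none => exact absurd hcb (hsink _)
    | some c => exact (ih rfl).tail hcb

theorem reflTransGen_some_none_iff (hsink : ∀ y, ¬ r none y) {a : α} :
    ReflTransGen r (some a) none ↔
      ∃ u, ReflTransGen (fun x y => r (some x) (some y)) a u ∧ r (some u) none := by
  constructor
  · intro h
    obtain h | ⟨c, hac, hc⟩ := h.cases_tail
    · cases h
    · cases c with
      | none => exact absurd hc (hsink _)
      | some u => exact ⟨u, (reflTransGen_some_some_iff hsink).1 hac, hc⟩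
  · rintro ⟨u, hau, hu⟩
    exact ((reflTransGen_some_some_iff hsink).2 hau).tail hu

end Relation

namespace Finset

theorem lt_card_iff_forall_exists_apply_notMem {α β : Type*} [DecidableEq β] {f : α → β}
    (hf : f.Injective) {R T : Finset α} (hRT : R ⊆ T) (k : ℕ) :
    k < R.card ↔ ∀ F ⊆ T.image f, F.card ≤ k → ∃ u ∈ R, f u ∉ F := by
  constructor
  · intro hk F _ hF
    obtain ⟨_, hx, hxF⟩ := exists_mem_notMem_of_card_lt_card
      (hF.trans_lt (hk.trans_eq (card_image_of_injective R hf).symm))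
    obtain ⟨u, hu, rfl⟩ := mem_image.1 hx
    exact ⟨u, hu, hxF⟩
  · intro h
    by_contra! hk
    obtain ⟨u, hu, hfu⟩ := h (R.image f) (image_subset_image hRT) (card_image_le.trans hk)
    exact hfu (mem_image_of_mem f hu)

theorem le_card_filter_iff_exists_subset {α : Type*} {p : α → Prop} [DecidablePred p]
    {s : Finset α} {n : ℕ} :
    n ≤ (s.filter p).card ↔ ∃ t ⊆ s, t.card = n ∧ ∀ x ∈ t, p x := by
  rw [le_card_iff_exists_subset_card]
  refine exists_congr fun t => ⟨?_, ?_⟩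
  · rintro ⟨hts, rfl⟩
    exact ⟨fun x hx => (mem_filter.1 (hts hx)).1, rfl, fun x hx => (mem_filter.1 (hts hx)).2⟩
  · rintro ⟨hts, rfl, hp⟩
    exact ⟨fun x hx => mem_filter.2 ⟨hts hx, hp x hx⟩, rfl⟩

end Finset

section Reduction

open Relation

variable {V : Type*} [DecidableEq V] {A : Finset (V × V)} {T : Finset V}
  {S F : Finset (Option V × Option V)}

theorem reflTransGen_sdiff_some_none_iff
    (hS1 : T.image (fun u => ((some u : Option V), (none : Option V))) ⊆ S)
    (hS2 : S ⊆ A.image (fun e => ((some e.1 : Option V), some e.2)) ∪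
      T.image (fun u => ((some u : Option V), (none : Option V))))
    (hF : F ⊆ T.image (fun u => ((some u : Option V), (none : Option V)))) (s : V) :
    ReflTransGen (fun x y => (x, y) ∈ S \ F) (some s) none ↔
      ∃ u ∈ T, ReflTransGen (fun x y => (x, y) ∈ A ∧ ((some x : Option V), some y) ∈ S) s u ∧
        ((some u : Option V), (none : Option V)) ∉ F := by
  have hsink : ∀ y, (none, y) ∉ S := fun y hy => by simpa using hS2 hy
  have hstep : ∀ x y : V, ((some x, some y) ∈ S \ F ↔ (x, y) ∈ A ∧ (some x, some y) ∈ S) := by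
    intro x y
    have hnF : (some x, some y) ∉ F := fun h => by simpa using hF h
    refine ⟨fun h => ⟨?_, (Finset.mem_sdiff.1 h).1⟩, fun h => Finset.mem_sdiff.2 ⟨h.2, hnF⟩⟩
    simpa using hS2 (Finset.mem_sdiff.1 h).1
  have hlast : ∀ u : V, ((some u, none) ∈ S \ F ↔ u ∈ T ∧ (some u, none) ∉ F) := by
    intro u
    rw [Finset.mem_sdiff, and_congr_left_iff]
    intro _
    exact ⟨fun h => by simpa using hS2 h, fun h => hS1 (Finset.mem_image_of_mem _ h)⟩
  rw [reflTransGen_some_none_iff fun y hy => hsink y (Finset.mem_sdiff.1 hy).1]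
  simp only [hstep, hlast]
  exact exists_congr fun _ => and_left_comm

end Reduction

/-- `D'` has vertex set `Option V`, the new sink `t` being `none`. -/
theorem stmt5_general {V : Type*} [DecidableEq V] (A : Finset (V × V)) (T : Finset V) (s : V)
    (m : ℕ) (hm : 1 ≤ m)
    (A' : Finset (Option V × Option V))
    (hA' : A' = T.image (fun u => ((some u : Option V), (none : Option V))))
    (S : Finset (Option V × Option V))
    (hS1 : A' ⊆ S)
    (hS2 : S ⊆ A.image (fun e => ((some e.1 : Option V), some e.2)) ∪ A') :
    ftpFeasible S A' (some s) none (m - 1) ↔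
      ∃ T' ⊆ T, T'.card = m ∧ ∀ u ∈ T',
        Relation.ReflTransGen
          (fun x y => (x, y) ∈ A ∧ ((some x : Option V), some y) ∈ S) s u := by
  classical
  subst hA'
  set reach := Relation.ReflTransGen (fun x y => (x, y) ∈ A ∧ ((some x : Option V), some y) ∈ S) s
  have hinj : (fun u => ((some u : Option V), (none : Option V))).Injective := fun u v h => by
    simpa using h
  rw [← Finset.le_card_filter_iff_exists_subset, ← Nat.lt_add_one_iff,
    ← Nat.sub_lt_iff_lt_add hm,
    Finset.lt_card_iff_forall_exists_apply_notMem hinj (T.filter_subset reach)]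
  refine forall₂_congr fun F hF => imp_congr_right fun _ => ?_
  simpa only [Finset.mem_filter, and_assoc] using reflTransGen_sdiff_some_none_iff hS1 hS2 hF s

/-- Correctness of the reduction from Directed `m`-Steiner Tree to FTP.
The graph `D'` lives on vertex set `Option V`, where `none` is the new sink `t`;
`A' = {(u, t) : u ∈ T}` are the (vulnerable) new zero-cost arcs. A set `S` with
`A' ⊆ S ⊆ A ∪ A'` is feasible for the FTP instance `(D', s, t, M = A', k = m - 1)`
iff at least `m` terminals are reachable from `s` in `(V, S ∩ A)`. -/
theorem stmt5 {V : Type*} [DecidableEq V] (A : Finset (V × V)) (T : Finset V) (s : V)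
    (m : ℕ) (hm : 1 ≤ m) (hmT : m ≤ T.card)
    (A' : Finset (Option V × Option V))
    (hA' : A' = T.image (fun u => ((some u : Option V), (none : Option V))))
    (S : Finset (Option V × Option V))
    (hS1 : A' ⊆ S)
    (hS2 : S ⊆ A.image (fun e => ((some e.1 : Option V), some e.2)) ∪ A') :
    ftpFeasible S A' (some s) none (m - 1) ↔
      ∃ T' ⊆ T, T'.card = m ∧ ∀ u ∈ T',
        Relation.ReflTransGen
          (fun x y => (x, y) ∈ A ∧ ((some x : Option V), some y) ∈ S) s u :=
  stmt5_general A T s m hm A' hA' S hS1 hS2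
end

section
/- Let D₁ = (V,A₁) and D₂ = (V,A₂) be directed graphs on the same vertex set V, let s ∈ V, T ⊆ V, and m ≤ |T|. Form a directed graph D on two disjoint copies V¹, V² of V whose arcs are the arcs of A₁ on V¹, the reversals of the arcs of A₂ on V², and for each u ∈ T an arc e_u from the copy u¹ ∈ V¹ to the copy u² ∈ V². Set M = {e_u : u ∈ T} and k = m−1, with source s¹ and sink s². Then a set S containing all arcs e_u is a feasible FTP solution for (D, s¹, s², M, m−1) if and only if there are at least m terminals u ∈ T such that S ∩ A₁ contains a directed s-u path in D₁ and S ∩ A₂ contains a directed s-u path in D₂. -/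
open Sum Finset

namespace Relation

variable {α β : Type*} {r : α ⊕ β → α ⊕ β → Prop}

theorem ReflTransGen.exists_eq_inr_of_inr (hr : ∀ b a, ¬ r (inr b) (inl a)) {b : β}
    {c : α ⊕ β} (h : ReflTransGen r (inr b) c) :
    ∃ b', c = inr b' ∧ ReflTransGen (fun x y => r (inr x) (inr y)) b b' := by
  induction h with
  | refl => exact ⟨b, rfl, .refl⟩
  | @tail c d _ hcd ih =>
    obtain ⟨b', rfl, hbb'⟩ := ih
    cases d with
    | inl a => exact absurd hcd (hr b' a)
    | inr d => exact ⟨d, rfl, hbb'.tail hcd⟩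

theorem reflTransGen_inl_inr_iff (hr : ∀ b a, ¬ r (inr b) (inl a)) {a : α} {b : β} :
    ReflTransGen r (inl a) (inr b) ↔
      ∃ a' b', ReflTransGen (fun x y => r (inl x) (inl y)) a a' ∧ r (inl a') (inr b') ∧
        ReflTransGen (fun x y => r (inr x) (inr y)) b' b := by
  constructor
  · intro h
    generalize hc : (inl a : α ⊕ β) = c at h
    induction h using ReflTransGen.head_induction_on generalizing a with
    | refl => cases hc
    | @head c d hcd hdb ih =>
      subst hc
      cases d with
      | inl a' =>
        obtain ⟨a'', b', haa'', hcross, hb'b⟩ := ih rfl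
        exact ⟨a'', b', haa''.head hcd, hcross, hb'b⟩
      | inr b' =>
        obtain ⟨b'', hb, hb'b''⟩ := hdb.exists_eq_inr_of_inr hr
        cases inr_injective hb
        exact ⟨a, b', .refl, hcd, hb'b''⟩
  · rintro ⟨a', b', haa', hcross, hb'b⟩
    exact ((haa'.lift inl fun _ _ h => h).tail hcross).trans (hb'b.lift inr fun _ _ h => h)

end Relation

namespace Finset

variable {α β : Type*} [DecidableEq β] {e : α → β} {T : Finset α} {p : α → Prop} {m : ℕ}

theorem exists_subset_card_eq_iff_forall_card_le_sub_one (he : Function.Injective e)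
    (hm : 1 ≤ m) :
    (∀ F ⊆ T.image e, #F ≤ m - 1 → ∃ u ∈ T, p u ∧ e u ∉ F) ↔
      ∃ T' ⊆ T, #T' = m ∧ ∀ u ∈ T', p u := by
  classical
  constructor
  · intro h
    have hcard : m ≤ #(T.filter p) := by
      by_contra! hlt
      obtain ⟨u, hu, hpu, huF⟩ := h _ (image_subset_image (filter_subset p T))
        (by rw [card_image_of_injective _ he]; omega)
      exact huF (mem_image_of_mem e (mem_filter.mpr ⟨hu, hpu⟩))
    obtain ⟨T', hT', rfl⟩ := exists_subset_card_eq hcard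
    exact ⟨T', hT'.trans (filter_subset p T), rfl, fun u hu => (mem_filter.mp (hT' hu)).2⟩
  · rintro ⟨T', hT'T, rfl, hT'p⟩ F - hF
    by_contra! hcover
    have : T'.image e ⊆ F := image_subset_iff.mpr fun u hu => hcover u (hT'T hu) (hT'p u hu)
    have := (card_le_card this).trans hF
    rw [card_image_of_injective _ he] at this
    omega

end Finset

namespace FaultTolerantPath

variable {V : Type*}

def terminalArc (u : V) : (V ⊕ V) × (V ⊕ V) := (inl u, inr u)

theorem terminalArc_injective : Function.Injective (terminalArc (V := V)) := fun _ _ h => by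
  simpa [terminalArc] using h

variable [DecidableEq V]

def reductionArcs (A₁ A₂ : Finset (V × V)) (T : Finset V) : Finset ((V ⊕ V) × (V ⊕ V)) :=
  A₁.image (fun e => (inl e.1, inl e.2)) ∪ A₂.image (fun e => (inr e.2, inr e.1)) ∪
    T.image terminalArc

variable {A₁ A₂ : Finset (V × V)} {T : Finset V} {S F : Finset ((V ⊕ V) × (V ⊕ V))}

theorem inr_inl_notMem (hS : S ⊆ reductionArcs A₁ A₂ T) (b a : V) : (inr b, inl a) ∉ S :=
  fun h => by simpa [reductionArcs, terminalArc] using hS h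

theorem inl_inl_mem_sdiff_iff (hS : S ⊆ reductionArcs A₁ A₂ T) (hF : F ⊆ T.image terminalArc)
    (a b : V) : (inl a, inl b) ∈ S \ F ↔ (a, b) ∈ A₁ ∧ (inl a, inl b) ∈ S := by
  refine ⟨fun h => ⟨?_, (mem_sdiff.mp h).1⟩, fun h => mem_sdiff.mpr ⟨h.2, fun hf => ?_⟩⟩
  · simpa [reductionArcs, terminalArc] using hS (mem_sdiff.mp h).1
  · simpa [terminalArc] using hF hf

theorem inr_inr_mem_sdiff_iff (hS : S ⊆ reductionArcs A₁ A₂ T) (hF : F ⊆ T.image terminalArc)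
    (a b : V) : (inr a, inr b) ∈ S \ F ↔ (b, a) ∈ A₂ ∧ (inr a, inr b) ∈ S := by
  refine ⟨fun h => ⟨?_, (mem_sdiff.mp h).1⟩, fun h => mem_sdiff.mpr ⟨h.2, fun hf => ?_⟩⟩
  · simpa [reductionArcs, terminalArc] using hS (mem_sdiff.mp h).1
  · simpa [terminalArc] using hF hf

theorem inl_inr_mem_sdiff_iff (hT : T.image terminalArc ⊆ S) (hS : S ⊆ reductionArcs A₁ A₂ T)
    (a b : V) : (inl a, inr b) ∈ S \ F ↔ a = b ∧ a ∈ T ∧ terminalArc a ∉ F := by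
  constructor
  · intro h
    obtain ⟨hab, hF⟩ := mem_sdiff.mp h
    obtain ⟨hb, rfl⟩ : b ∈ T ∧ b = a := by simpa [reductionArcs, terminalArc] using hS hab
    exact ⟨rfl, hb, hF⟩
  · rintro ⟨rfl, ha, hF⟩
    exact mem_sdiff.mpr ⟨hT (mem_image_of_mem _ ha), hF⟩

theorem reflTransGen_inl_inr_sdiff_iff (hT : T.image terminalArc ⊆ S)
    (hS : S ⊆ reductionArcs A₁ A₂ T) (hF : F ⊆ T.image terminalArc) (s : V) :
    Relation.ReflTransGen (fun x y => (x, y) ∈ S \ F) (inl s) (inr s) ↔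
      ∃ u ∈ T, (Relation.ReflTransGen (fun x y => (x, y) ∈ A₁ ∧ (inl x, inl y) ∈ S) s u ∧
        Relation.ReflTransGen (fun x y => (x, y) ∈ A₂ ∧ (inr y, inr x) ∈ S) s u) ∧
        terminalArc u ∉ F := by
  have hback : ∀ b a : V, (inr b, inl a) ∉ S \ F := fun b a h =>
    inr_inl_notMem hS b a (mem_sdiff.mp h).1
  simp only [Relation.reflTransGen_inl_inr_iff (r := fun x y => (x, y) ∈ S \ F) hback,
    inl_inl_mem_sdiff_iff hS hF, inr_inr_mem_sdiff_iff hS hF, inl_inr_mem_sdiff_iff hT hS]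
  constructor
  · rintro ⟨u, _, h₁, ⟨rfl, hu, huF⟩, h₂⟩
    exact ⟨u, hu, ⟨h₁, Relation.reflTransGen_swap.mp h₂⟩, huF⟩
  · rintro ⟨u, hu, ⟨h₁, h₂⟩, huF⟩
    exact ⟨u, u, h₁, ⟨rfl, hu, huF⟩, Relation.reflTransGen_swap.mpr h₂⟩

end FaultTolerantPath

open FaultTolerantPath

theorem stmt6_general {V : Type*} [DecidableEq V] (A₁ A₂ : Finset (V × V)) (T : Finset V) (s : V)
    (m : ℕ) (hm : 1 ≤ m)
    (M : Finset ((V ⊕ V) × (V ⊕ V)))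
    (hM : M = T.image (fun u => ((Sum.inl u : V ⊕ V), (Sum.inr u : V ⊕ V))))
    (S : Finset ((V ⊕ V) × (V ⊕ V)))
    (hS1 : M ⊆ S)
    (hS2 : S ⊆ A₁.image (fun e => ((Sum.inl e.1 : V ⊕ V), (Sum.inl e.2 : V ⊕ V))) ∪
            A₂.image (fun e => ((Sum.inr e.2 : V ⊕ V), (Sum.inr e.1 : V ⊕ V))) ∪ M) :
    ftpFeasible S M (Sum.inl s) (Sum.inr s) (m - 1) ↔
      ∃ T' ⊆ T, T'.card = m ∧ ∀ u ∈ T',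
        Relation.ReflTransGen
          (fun x y => (x, y) ∈ A₁ ∧ ((Sum.inl x : V ⊕ V), (Sum.inl y : V ⊕ V)) ∈ S) s u ∧
        Relation.ReflTransGen
          (fun x y => (x, y) ∈ A₂ ∧ ((Sum.inr y : V ⊕ V), (Sum.inr x : V ⊕ V)) ∈ S) s u := by
  subst hM
  exact (forall₂_congr fun _ hF => imp_congr_right fun _ =>
    reflTransGen_inl_inr_sdiff_iff hS1 hS2 hF s).trans
      (exists_subset_card_eq_iff_forall_card_le_sub_one terminalArc_injective hm)

/-- Correctness of the reduction from Simultaneous Directed `m`-Steiner Tree to FTP.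
The constructed graph lives on `V ⊕ V` (two disjoint copies of `V`): it has the arcs
of `A₁` on the first copy, the reversals of the arcs of `A₂` on the second copy, and
for each terminal `u ∈ T` the vulnerable arc `e_u = (inl u, inr u)`. A set `S`
containing all arcs `e_u` (and contained in the constructed arc set) is feasible for
the FTP instance with source `inl s`, sink `inr s`, `M = {e_u : u ∈ T}` and
`k = m - 1` iff for at least `m` terminals `u ∈ T`, `S ∩ A₁` contains a directed
`s`-`u` path in `D₁` and `S ∩ A₂` contains a directed `s`-`u` path in `D₂`. -/
theorem stmt6 {V : Type*} [DecidableEq V] (A₁ A₂ : Finset (V × V)) (T : Finset V) (s : V)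
    (m : ℕ) (hm : 1 ≤ m) (hmT : m ≤ T.card)
    (M : Finset ((V ⊕ V) × (V ⊕ V)))
    (hM : M = T.image (fun u => ((Sum.inl u : V ⊕ V), (Sum.inr u : V ⊕ V))))
    (S : Finset ((V ⊕ V) × (V ⊕ V)))
    (hS1 : M ⊆ S)
    (hS2 : S ⊆ A₁.image (fun e => ((Sum.inl e.1 : V ⊕ V), (Sum.inl e.2 : V ⊕ V))) ∪
            A₂.image (fun e => ((Sum.inr e.2 : V ⊕ V), (Sum.inr e.1 : V ⊕ V))) ∪ M) :
    ftpFeasible S M (Sum.inl s) (Sum.inr s) (m - 1) ↔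
      ∃ T' ⊆ T, T'.card = m ∧ ∀ u ∈ T',
        Relation.ReflTransGen
          (fun x y => (x, y) ∈ A₁ ∧ ((Sum.inl x : V ⊕ V), (Sum.inl y : V ⊕ V)) ∈ S) s u ∧
        Relation.ReflTransGen
          (fun x y => (x, y) ∈ A₂ ∧ ((Sum.inr y : V ⊕ V), (Sum.inr x : V ⊕ V)) ∈ S) s u :=
  stmt6_general A₁ A₂ T s m hm M hM S hS1 hS2
end

section
/- Fix integers k ≥ 0 and p > k, and let D be the directed multigraph on vertices {s,t} with p parallel arcs from s to t, each of unit cost and each vulnerable (M = A). Then: (i) a set S of arcs is a feasible FTP solution with parameter k if and only if |S| ≥ k+1, so the optimal integral cost is k+1; (ii) the constant vector x with x_e = 1/(p−k) for every arc e is fractionally feasible (for every F ⊆ M with |F| ≤ k, the total x-capacity of the surviving arcs is at least 1) and has cost p/(p−k). Consequently the ratio between the integral and fractional optima is (k+1)(p−k)/p, which tends to k+1 as p → ∞. -/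
open Filter Finset

theorem Finset.forall_card_le_sdiff_nonempty_iff {α : Type*} [DecidableEq α] (S : Finset α)
    (k : ℕ) : (∀ F : Finset α, F.card ≤ k → (S \ F).Nonempty) ↔ k + 1 ≤ S.card := by
  refine ⟨fun h => ?_, fun hS F hF => ?_⟩
  · by_contra! hS
    simpa using h S (by omega)
  · rw [← card_pos]
    have := card_le_card_sdiff_add_card (s := S) (t := F)
    omega

theorem one_le_sum_compl_inv_card_sub {α : Type*} [Fintype α] [DecidableEq α] {k : ℕ}
    (hk : k < Fintype.card α) {F : Finset α} (hF : F.card ≤ k) :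
    (1 : ℝ) ≤ ∑ _e ∈ univ \ F, 1 / ((Fintype.card α : ℝ) - k) := by
  have hpos : (0 : ℝ) < Fintype.card α - k := sub_pos.mpr (by exact_mod_cast hk)
  have hFk : (F.card : ℝ) ≤ k := by exact_mod_cast hF
  rw [sum_const, card_univ_sdiff, nsmul_eq_mul,
    Nat.cast_sub (card_le_univ F), mul_one_div, le_div_iff₀ hpos, one_mul]
  linarith

theorem tendsto_mul_sub_div_self_atTop (a b : ℝ) :
    Tendsto (fun q : ℕ => a * ((q : ℝ) - b) / q) atTop (nhds a) := by
  have h : Tendsto (fun q : ℕ => a - a * b / q) atTop (nhds (a - 0)) :=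
    tendsto_const_nhds.sub (tendsto_const_div_atTop_nhds_zero_nat _)
  rw [sub_zero] at h
  refine h.congr' ?_
  filter_upwards [eventually_gt_atTop 0] with q hq0
  have hq : (q : ℝ) ≠ 0 := by exact_mod_cast hq0.ne'
  field_simp

/-- The tight integrality-gap family: the digraph on `{s, t}` with `p > k` parallel
unit-cost arcs (indexed by `Fin p`) from `s` to `t`, all vulnerable.
(i) A set `S` of arcs is a feasible FTP solution (after removing any `F` with
`|F| ≤ k` some arc, i.e. an `s`-`t` path, survives) iff `|S| ≥ k + 1`; hence the
optimal integral cost is `k + 1`.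
(ii) The constant capacity vector `x ≡ 1/(p-k)` takes values in `[0,1]`, is
fractionally feasible, and has cost `p/(p-k)`.
Consequently the integral/fractional ratio is `(k+1)(p-k)/p`, which tends to `k+1`
as `p → ∞`. -/
theorem stmt8 (k p : ℕ) (hkp : k < p) :
    (∀ S : Finset (Fin p),
      (∀ F : Finset (Fin p), F.card ≤ k → (S \ F).Nonempty) ↔ k + 1 ≤ S.card) ∧
    ((0 : ℝ) ≤ 1 / ((p : ℝ) - k) ∧ 1 / ((p : ℝ) - k) ≤ 1) ∧
    (∀ F : Finset (Fin p), F.card ≤ k →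
      (1 : ℝ) ≤ ∑ _e ∈ (Finset.univ : Finset (Fin p)) \ F, (1 / ((p : ℝ) - k))) ∧
    (∑ _e : Fin p, (1 / ((p : ℝ) - k))) = (p : ℝ) / ((p : ℝ) - k) ∧
    ((k : ℝ) + 1) / ((p : ℝ) / ((p : ℝ) - k)) = ((k : ℝ) + 1) * ((p : ℝ) - k) / p ∧
    Filter.Tendsto (fun q : ℕ => ((k : ℝ) + 1) * ((q : ℝ) - k) / q)
      Filter.atTop (nhds ((k : ℝ) + 1)) := by
  have hk1p : (k : ℝ) + 1 ≤ p := by exact_mod_cast hkp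
  have hpk : (0 : ℝ) < p - k := by linarith
  refine ⟨fun S => S.forall_card_le_sdiff_nonempty_iff k, ⟨by positivity, ?_⟩, fun F hF => ?_,
    ?_, by field_simp, tendsto_mul_sub_div_self_atTop _ _⟩
  · rw [div_le_one hpk]
    linarith
  · simpa using one_le_sum_compl_inv_card_sub (by simpa using hkp) hF
  · simp [div_eq_mul_inv]
end

section
/- Let D = (V,A) be a directed graph with nonnegative arc costs w, s,t ∈ V, M ⊆ A, k ≥ 0, and let X* ⊆ A be an optimal (minimum-cost) feasible FTP solution for (D,s,t,M,k). Suppose u,v ∈ V are vertices such that every directed s-t path in (V,X*) visits u and later v, and let Y ⊆ X* be the set of arcs lying on some directed u-v path of (V,X*). Then Y is a feasible FTP solution for the instance (D,u,v,M,k), and its cost is minimum among all feasible FTP solutions for (D,u,v,M,k). -/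
/-- `L` is (the vertex list of) a directed `a`-`b` path using only arcs of `S`. -/
def IsPathIn {V : Type*} [DecidableEq V] (S : Finset (V × V)) (a b : V) (L : List V) : Prop :=
  L.head? = some a ∧ L.getLast? = some b ∧ L.Nodup ∧
    L.Chain' (fun x y => (x, y) ∈ S)

/-!
Take an `s`-`t` path in `X \ F`; it passes through `u` and later `v`, which cuts it into three
pieces. The middle piece is a `u`-`v` path in `X`, so its arcs lie in `Y`: this gives feasibility
of `Y`. The outer pieces contain no arc of `Y`. Indeed, an arc `(x, y)` of a `u`-`v` path of `X`
gives a walk from `y` to `v` avoiding `u` and one from `u` to `x` avoiding `v`; spliced into the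
`s`-`u` piece (resp. the `v`-`t` piece) it would give an `s`-`t` walk in `X` avoiding `u`
(resp. `v`), which every `s`-`t` path must visit. Hence for every feasible `Z` for `(u, v)` the
arc set `(X \ Y) ∪ Z` is feasible for `(s, t)`, and optimality of `X` with `w ≥ 0` gives
`w(Y) ≤ w(Z)`.
-/

open Relation

namespace List

variable {α : Type*} {r : α → α → Prop} {l : List α} {a b : α}

theorem mem_zip_tail_iff :
    (a, b) ∈ l.zip l.tail ↔ ∃ l₁ l₂, l = l₁ ++ a :: b :: l₂ := by
  induction l with
  | nil => simp
  | cons c l ih =>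
    cases l with
    | nil =>
      simp only [tail_cons, zip_nil_right, not_mem_nil, false_iff, not_exists]
      intro l₁ l₂ h
      have := congrArg length h
      simp only [length_cons, length_nil, length_append] at this
      omega
    | cons d l =>
      simp only [tail_cons, zip_cons_cons, mem_cons, Prod.mk.injEq] at ih ⊢
      constructor
      · rintro (⟨rfl, rfl⟩ | h)
        · exact ⟨[], l, rfl⟩
        · obtain ⟨l₁, l₂, hl⟩ := ih.mp h
          exact ⟨c :: l₁, l₂, by rw [hl, cons_append]⟩
      · rintro ⟨_ | ⟨e, l₁⟩, l₂, h⟩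
        · simp_all
        · simp only [cons_append, cons.injEq] at h
          exact .inr (ih.mpr ⟨l₁, l₂, h.2⟩)

theorem IsChain.reflTransGen_of_head?_eq (h : l.IsChain r) (ha : l.head? = some a)
    (hb : b ∈ l) : ReflTransGen r a b := by
  obtain ⟨l, rfl⟩ := head?_eq_some_iff.mp ha
  exact h.induction (ReflTransGen r a) _ (fun _ _ hxy hx => hx.tail hxy) (fun _ => .refl) b hb

theorem IsChain.reflTransGen_of_getLast?_eq (h : l.IsChain r) (ha : a ∈ l)
    (hb : l.getLast? = some b) : ReflTransGen r a b := by
  obtain ⟨l, rfl⟩ := getLast?_eq_some_iff.mp hb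
  exact h.backwards_induction (ReflTransGen r · b) _ (fun _ _ hxy hy => hy.head hxy)
    (fun _ => by rw [getLast_concat]) a ha

theorem IsChain.avoiding {c : α} (h : l.IsChain r) (hc : c ∉ l) :
    l.IsChain (fun x y => r x y ∧ y ≠ c) :=
  (IsChain.iff_mem.mp h).imp fun _ _ ⟨_, hy, hxy⟩ => ⟨hxy, fun h => hc (h ▸ hy)⟩

end List

theorem Relation.ReflTransGen.exists_nodup_isChain_s9 {α : Type*} [DecidableEq α]
    {r : α → α → Prop} {a b : α} (h : ReflTransGen r a b) :
    ∃ l : List α, l.head? = some a ∧ l.getLast? = some b ∧ l.Nodup ∧ l.IsChain r := by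
  induction h with
  | refl => exact ⟨[a], rfl, rfl, List.nodup_singleton a, .singleton a⟩
  | @tail c d _ hcd ih =>
    obtain ⟨l, ha, hc, hnd, hch⟩ := ih
    by_cases hd : d ∈ l
    · obtain ⟨l₁, l₂, rfl⟩ := List.append_of_mem hd
      have hpre : l₁ ++ [d] <+: l₁ ++ d :: l₂ := ⟨l₂, by simp⟩
      refine ⟨l₁ ++ [d], ?_, List.getLast?_concat, hpre.sublist.nodup hnd, hch.prefix hpre⟩
      rw [← ha, List.head?_append, List.head?_append]
      rfl
    · refine ⟨l ++ [d], by simp [List.head?_append, ha], List.getLast?_concat, ?_, ?_⟩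
      · grind [List.nodup_append]
      · exact List.isChain_append.mpr ⟨hch, .singleton d, by simp_all⟩

theorem Finset.sum_le_sum_of_sum_le_sum_sdiff_union {ι M : Type*} [DecidableEq ι]
    [AddCommMonoid M] [PartialOrder M] [IsOrderedCancelAddMonoid M] {X Y Z : Finset ι}
    {w : ι → M} (hYX : Y ⊆ X) (hZ : ∀ e ∈ Z, 0 ≤ w e)
    (h : ∑ e ∈ X, w e ≤ ∑ e ∈ (X \ Y) ∪ Z, w e) :
    ∑ e ∈ Y, w e ≤ ∑ e ∈ Z, w e := by
  refine le_of_add_le_add_left (a := ∑ e ∈ X \ Y, w e) ?_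
  calc ∑ e ∈ X \ Y, w e + ∑ e ∈ Y, w e
      = ∑ e ∈ X, w e := Finset.sum_sdiff hYX
    _ ≤ ∑ e ∈ (X \ Y) ∪ Z, w e := h
    _ ≤ ∑ e ∈ (X \ Y) ∪ Z, w e + ∑ e ∈ (X \ Y) ∩ Z, w e :=
        le_add_of_nonneg_right (Finset.sum_nonneg fun e he => hZ e (Finset.mem_inter.mp he).2)
    _ = ∑ e ∈ X \ Y, w e + ∑ e ∈ Z, w e := Finset.sum_union_inter

section FaultTolerantPath

variable {V : Type*} [DecidableEq V] {X Y F : Finset (V × V)} {s t u v c : V}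

theorem IsPathIn.mono {S T : Finset (V × V)} {a b : V} {L : List V} (hST : S ⊆ T)
    (h : IsPathIn S a b L) : IsPathIn T a b L :=
  ⟨h.1, h.2.1, h.2.2.1, h.2.2.2.imp fun _ _ hxy => hST hxy⟩

theorem IsPathIn.mem_of_mem_zip_tail {S : Finset (V × V)} {a b : V} {L : List V} {e : V × V}
    (h : IsPathIn S a b L) (he : e ∈ L.zip L.tail) : e ∈ S := by
  obtain ⟨l₁, l₂, hL⟩ := List.mem_zip_tail_iff.mp he
  exact List.isChain_iff_forall_rel_of_append_cons_cons.mp h.2.2.2 hL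

theorem not_reflTransGen_avoiding (hc : ∀ L, IsPathIn X s t L → c ∈ L) (hs : s ≠ c) :
    ¬ ReflTransGen (fun x y => (x, y) ∈ X ∧ y ≠ c) s t := by
  intro h
  obtain ⟨L, hLs, hLt, hnd, hch⟩ := h.exists_nodup_isChain_s9
  have hcL := hc L ⟨hLs, hLt, hnd, hch.imp fun _ _ => And.left⟩
  obtain ⟨L, rfl⟩ := List.head?_eq_some_iff.mp hLs
  exact hch.induction (· ≠ c) _ (fun _ _ hxy _ => hxy.2) (fun _ => hs) c hcL rfl

theorem reflTransGen_avoiding_of_mem_zip_tail {P : List V} {x y : V} (hP : IsPathIn X u v P)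
    (hxy : (x, y) ∈ P.zip P.tail) :
    (x ≠ v ∧ ReflTransGen (fun a b => (a, b) ∈ X ∧ b ≠ v) u x) ∧
      (y ≠ u ∧ ReflTransGen (fun a b => (a, b) ∈ X ∧ b ≠ u) y v) := by
  obtain ⟨p₁, p₂, rfl⟩ := List.mem_zip_tail_iff.mp hxy
  obtain ⟨hu, hv, hnd, hch⟩ := hP
  have hsplit : p₁ ++ x :: y :: p₂ = (p₁ ++ [x]) ++ y :: p₂ := by simp
  rw [hsplit] at hu hv hnd hch
  rw [List.head?_append_of_ne_nil _ (by simp)] at hu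
  rw [List.getLast?_append_of_ne_nil _ (by simp)] at hv
  have hdisj := (List.nodup_append.mp hnd).2.2
  have hv₁ : v ∉ p₁ ++ [x] := fun h => hdisj v h v (List.mem_of_getLast? hv) rfl
  have hu₂ : u ∉ y :: p₂ := fun h => hdisj u (List.mem_of_mem_head? hu) u h rfl
  refine ⟨⟨fun h => hv₁ (by simp [h]), ?_⟩, ⟨fun h => hu₂ (by simp [h]), ?_⟩⟩
  · exact ((hch.prefix (List.prefix_append _ _)).avoiding hv₁).reflTransGen_of_head?_eq hu
      (by simp)
  · exact ((hch.suffix (List.suffix_append _ _)).avoiding hu₂).reflTransGen_of_getLast?_eq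
      List.mem_cons_self hv

theorem reflTransGen_sdiff_of_prefix (hu : ∀ L, IsPathIn X s t L → u ∈ L)
    (hY : ∀ e : V × V, e ∈ Y ↔ ∃ L : List V, IsPathIn X u v L ∧ e ∈ L.zip L.tail)
    {l₁ l₂ : List V} (hL : IsPathIn (X \ F) s t (l₁ ++ u :: l₂)) (hv : v ∈ l₂) :
    ReflTransGen (fun x y => (x, y) ∈ (X \ Y) \ F) s u := by
  obtain ⟨hs, ht, hnd, hch⟩ := hL
  have hchX : (l₁ ++ u :: l₂).IsChain (fun x y => (x, y) ∈ X) :=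
    hch.imp fun _ _ h => (Finset.mem_sdiff.mp h).1
  have hu₁ : u ∉ l₁ := fun h => (List.nodup_append.mp hnd).2.2 u h u List.mem_cons_self rfl
  have hu₂ : u ∉ l₂ := (List.nodup_cons.mp (List.nodup_append.mp hnd).2.1).1
  have hsplit : l₁ ++ u :: l₂ = (l₁ ++ [u]) ++ l₂ := by simp
  have hs' : (l₁ ++ [u]).head? = some s := by
    rwa [hsplit, List.head?_append_of_ne_nil _ (by simp)] at hs
  have hpre := List.IsChain.iff_mem.mp (hch.prefix (l₁ := l₁ ++ [u]) ⟨l₂, hsplit.symm⟩)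
  refine ReflTransGen.mono (fun x y ⟨_, hy, hxy⟩ => ?_) _ _
    (hpre.reflTransGen_of_head?_eq hs' List.mem_concat_self)
  simp only [Finset.mem_sdiff] at hxy ⊢
  refine ⟨⟨hxy.1, fun hxyY => ?_⟩, hxy.2⟩
  obtain ⟨P, hP, hxyP⟩ := (hY _).mp hxyY
  obtain ⟨-, hyu, hyv⟩ := reflTransGen_avoiding_of_mem_zip_tail hP hxyP
  -- `s → y` along `l₁`, then `y → v` along `P`, then `v → t` along `l₂`: all avoiding `u`
  have hy₁ : y ∈ l₁ := by simpa [hyu] using hy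
  have hs₁ : l₁.head? = some s := by
    rwa [List.head?_append_of_ne_nil _ (List.ne_nil_of_mem hy₁)] at hs
  have ht₂ : l₂.getLast? = some t := by
    rwa [hsplit, List.getLast?_append_of_ne_nil _ (List.ne_nil_of_mem hv)] at ht
  have hsy :=
    ((hchX.prefix (List.prefix_append _ _)).avoiding hu₁).reflTransGen_of_head?_eq hs₁ hy₁
  have hl₂ : l₂ <:+ l₁ ++ u :: l₂ := ⟨l₁ ++ [u], hsplit.symm⟩
  have hvt := ((hchX.suffix hl₂).avoiding hu₂).reflTransGen_of_getLast?_eq hv ht₂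
  exact not_reflTransGen_avoiding hu (fun h => hu₁ (h ▸ List.mem_of_mem_head? hs₁))
    ((hsy.trans hyv).trans hvt)

theorem reflTransGen_sdiff_of_suffix (hv : ∀ L, IsPathIn X s t L → v ∈ L)
    (hY : ∀ e : V × V, e ∈ Y ↔ ∃ L : List V, IsPathIn X u v L ∧ e ∈ L.zip L.tail)
    {l₁ l₂ : List V} (hL : IsPathIn (X \ F) s t (l₁ ++ v :: l₂)) (hu : u ∈ l₁) :
    ReflTransGen (fun x y => (x, y) ∈ (X \ Y) \ F) v t := by
  obtain ⟨hs, ht, hnd, hch⟩ := hL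
  have hchX : (l₁ ++ v :: l₂).IsChain (fun x y => (x, y) ∈ X) :=
    hch.imp fun _ _ h => (Finset.mem_sdiff.mp h).1
  have hv₁ : v ∉ l₁ := fun h => (List.nodup_append.mp hnd).2.2 v h v List.mem_cons_self rfl
  have hv₂ : v ∉ l₂ := (List.nodup_cons.mp (List.nodup_append.mp hnd).2.1).1
  have hsplit : l₁ ++ v :: l₂ = (l₁ ++ [v]) ++ l₂ := by simp
  have ht' : (v :: l₂).getLast? = some t := by
    rwa [List.getLast?_append_of_ne_nil _ (by simp)] at ht
  have hsuf := List.IsChain.iff_mem.mp (hch.suffix (List.suffix_append l₁ (v :: l₂)))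
  refine ReflTransGen.mono (fun x y ⟨hx, _, hxy⟩ => ?_) _ _
    (hsuf.reflTransGen_of_getLast?_eq List.mem_cons_self ht')
  simp only [Finset.mem_sdiff] at hxy ⊢
  refine ⟨⟨hxy.1, fun hxyY => ?_⟩, hxy.2⟩
  obtain ⟨P, hP, hxyP⟩ := (hY _).mp hxyY
  obtain ⟨⟨hxv, hux⟩, -⟩ := reflTransGen_avoiding_of_mem_zip_tail hP hxyP
  -- `s → u` along `l₁`, then `u → x` along `P`, then `x → t` along `l₂`: all avoiding `v`
  have hx₂ : x ∈ l₂ := by simpa [hxv] using hx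
  have hs₁ : l₁.head? = some s := by
    rwa [List.head?_append_of_ne_nil _ (List.ne_nil_of_mem hu)] at hs
  have ht₂ : l₂.getLast? = some t := by
    rwa [hsplit, List.getLast?_append_of_ne_nil _ (List.ne_nil_of_mem hx₂)] at ht
  have hsu :=
    ((hchX.prefix (List.prefix_append _ _)).avoiding hv₁).reflTransGen_of_head?_eq hs₁ hu
  have hl₂ : l₂ <:+ l₁ ++ v :: l₂ := ⟨l₁ ++ [v], hsplit.symm⟩
  have hxt := ((hchX.suffix hl₂).avoiding hv₂).reflTransGen_of_getLast?_eq hx₂ ht₂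
  exact not_reflTransGen_avoiding hv (fun h => hv₁ (h ▸ List.mem_of_mem_head? hs₁))
    ((hsu.trans hux).trans hxt)

theorem reflTransGen_sdiff_of_infix
    (hY : ∀ e : V × V, e ∈ Y ↔ ∃ L : List V, IsPathIn X u v L ∧ e ∈ L.zip L.tail)
    {l₁ l₂ l₃ : List V} (hL : IsPathIn (X \ F) s t (l₁ ++ u :: (l₂ ++ v :: l₃))) :
    ReflTransGen (fun x y => (x, y) ∈ Y \ F) u v := by
  set P := u :: (l₂ ++ [v])
  have hinf : P <:+: l₁ ++ u :: (l₂ ++ v :: l₃) := ⟨l₁, l₃, by simp [P]⟩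
  have hP : IsPathIn (X \ F) u v P :=
    ⟨rfl, List.getLast?_concat (l := u :: l₂), hinf.sublist.nodup hL.2.2.1,
      hL.2.2.2.infix hinf⟩
  have hPY : P.IsChain (fun x y => (x, y) ∈ Y \ F) :=
    List.isChain_iff_forall_rel_of_append_cons_cons.mpr fun x y q₁ q₂ hq => by
      have hxy : (x, y) ∈ P.zip P.tail := List.mem_zip_tail_iff.mpr ⟨q₁, q₂, hq⟩
      exact Finset.mem_sdiff.mpr ⟨(hY _).mpr ⟨P, hP.mono Finset.sdiff_subset, hxy⟩,
        (Finset.mem_sdiff.mp (hP.mem_of_mem_zip_tail hxy)).2⟩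
  exact hPY.reflTransGen_of_head?_eq rfl (by simp [P])

theorem reflTransGen_split
    (hvisit : ∀ L : List V, IsPathIn X s t L →
      ∃ l₁ l₂ l₃ : List V, L = l₁ ++ u :: (l₂ ++ v :: l₃))
    (hY : ∀ e : V × V, e ∈ Y ↔ ∃ L : List V, IsPathIn X u v L ∧ e ∈ L.zip L.tail)
    (h : ReflTransGen (fun x y => (x, y) ∈ X \ F) s t) :
    ReflTransGen (fun x y => (x, y) ∈ Y \ F) u v ∧
      ReflTransGen (fun x y => (x, y) ∈ (X \ Y) \ F) s u ∧
      ReflTransGen (fun x y => (x, y) ∈ (X \ Y) \ F) v t := by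
  have hu : ∀ L, IsPathIn X s t L → u ∈ L := fun L hL => by
    obtain ⟨l₁, l₂, l₃, rfl⟩ := hvisit L hL
    simp
  have hv : ∀ L, IsPathIn X s t L → v ∈ L := fun L hL => by
    obtain ⟨l₁, l₂, l₃, rfl⟩ := hvisit L hL
    simp
  obtain ⟨L, hL⟩ : ∃ L, IsPathIn (X \ F) s t L := h.exists_nodup_isChain_s9
  obtain ⟨l₁, l₂, l₃, rfl⟩ := hvisit L (IsPathIn.mono Finset.sdiff_subset hL)
  exact ⟨reflTransGen_sdiff_of_infix hY hL, reflTransGen_sdiff_of_prefix hu hY hL (by simp),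
    reflTransGen_sdiff_of_suffix (l₁ := l₁ ++ u :: l₂) hv hY (by simpa using hL) (by simp)⟩

end FaultTolerantPath

theorem stmt9_general {V : Type*} [DecidableEq V] (A X M Y : Finset (V × V))
    (s t u v : V) (k : ℕ) (w : V × V → ℝ)
    (hw : ∀ e ∈ A, 0 ≤ w e)
    (hXA : X ⊆ A)
    (hfeas : ftpFeasible X M s t k)
    (hopt : ∀ Z ⊆ A, ftpFeasible Z M s t k → ∑ e ∈ X, w e ≤ ∑ e ∈ Z, w e)
    (hvisit : ∀ L : List V, IsPathIn X s t L →
      ∃ l₁ l₂ l₃ : List V, L = l₁ ++ u :: (l₂ ++ v :: l₃))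
    (hY : ∀ e : V × V, e ∈ Y ↔ ∃ L : List V, IsPathIn X u v L ∧ e ∈ L.zip L.tail) :
    ftpFeasible Y M u v k ∧
      ∀ Z ⊆ A, ftpFeasible Z M u v k → ∑ e ∈ Y, w e ≤ ∑ e ∈ Z, w e := by
  refine ⟨fun F hFM hFk => (reflTransGen_split hvisit hY (hfeas F hFM hFk)).1,
    fun Z hZA hZ => ?_⟩
  have hYX : Y ⊆ X := fun e he => by
    obtain ⟨L, hL, he⟩ := (hY e).mp he
    exact hL.mem_of_mem_zip_tail he
  have hspliced : ftpFeasible ((X \ Y) ∪ Z) M s t k := fun F hFM hFk => by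
    have hmono {S : Finset (V × V)} (hS : S ⊆ (X \ Y) ∪ Z) :=
      ReflTransGen.mono fun x y (h : (x, y) ∈ S \ F) => Finset.sdiff_subset_sdiff hS le_rfl h
    obtain ⟨-, hsu, hvt⟩ := reflTransGen_split hvisit hY (hfeas F hFM hFk)
    exact ((hmono Finset.subset_union_left _ _ hsu).trans
      (hmono Finset.subset_union_right _ _ (hZ F hFM hFk))).trans
      (hmono Finset.subset_union_left _ _ hvt)
  exact Finset.sum_le_sum_of_sum_le_sum_sdiff_union hYX (fun e he => hw e (hZA he))
    (hopt _ (Finset.union_subset (Finset.sdiff_subset.trans hXA) hZA) hspliced)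

/-- Decomposition of an optimal FTP solution: if `X` is an optimal feasible FTP
solution for `(D, s, t, M, k)`, `u, v` are such that every directed `s`-`t` path of
`(V, X)` visits `u` and later `v`, and `Y` is the set of arcs of `X` lying on some
directed `u`-`v` path of `(V, X)`, then `Y` is a feasible FTP solution for
`(D, u, v, M, k)` of minimum cost. -/
theorem stmt9 {V : Type*} [Fintype V] [DecidableEq V] (A X M Y : Finset (V × V))
    (s t u v : V) (k : ℕ) (w : V × V → ℝ)
    (hw : ∀ e ∈ A, 0 ≤ w e)
    (hXA : X ⊆ A) (hMA : M ⊆ A)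
    (hfeas : ftpFeasible X M s t k)
    (hopt : ∀ Z ⊆ A, ftpFeasible Z M s t k → ∑ e ∈ X, w e ≤ ∑ e ∈ Z, w e)
    (hvisit : ∀ L : List V, IsPathIn X s t L →
      ∃ l₁ l₂ l₃ : List V, L = l₁ ++ u :: (l₂ ++ v :: l₃))
    (hY : ∀ e : V × V, e ∈ Y ↔ ∃ L : List V, IsPathIn X u v L ∧ e ∈ L.zip L.tail) :
    ftpFeasible Y M u v k ∧
      ∀ Z ⊆ A, ftpFeasible Z M u v k → ∑ e ∈ Y, w e ≤ ∑ e ∈ Z, w e :=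
  stmt9_general A X M Y s t u v k w hw hXA hfeas hopt hvisit hY
end

section
/- Let D = (V,A) be a directed graph, s,t ∈ V, M ⊆ A, ℓ ≥ 1, and let Y ⊆ A. If for every V' ⊆ V with s ∈ V' and t ∉ V' the cut Z = δ⁺(V') ∩ Y contains at least ℓ safe arcs or at least ℓ+1 arcs (equivalently, if (V,Y) admits an s-t flow of value ℓ+1 under capacities g_e = 1 for e ∈ M and g_e = 1 + 1/ℓ for e ∉ M), then Y is a feasible FTF solution: for every f ∈ M the graph (V, Y∖{f}) contains ℓ pairwise arc-disjoint directed s-t paths. -/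
/-- `S` contains `ℓ` pairwise arc-disjoint directed `s`-`t` paths. -/
def HasDisjointPaths {V : Type*} [DecidableEq V] (S : Finset (V × V)) (s t : V)
    (ℓ : ℕ) : Prop :=
  ∃ P : Fin ℓ → Finset (V × V), (∀ i, P i ⊆ S) ∧
    (∀ i j, i ≠ j → Disjoint (P i) (P j)) ∧ ∀ i, IsPathArcs s t (P i)

/-- Feasibility for Fault-Tolerant Flow: for every vulnerable arc `f ∈ M`, the
digraph `(V, S \ {f})` contains `ℓ` pairwise arc-disjoint directed `s`-`t` paths. -/
def ftfFeasible {V : Type*} [DecidableEq V] (S M : Finset (V × V)) (s t : V)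
    (ℓ : ℕ) : Prop :=
  ∀ f ∈ M, HasDisjointPaths (S.erase f) s t ℓ

open Finset Relation

theorem exists_closed_of_not_reflTransGen {α : Type*} [Fintype α] {r : α → α → Prop}
    {s t : α} (h : ¬ReflTransGen r s t) :
    ∃ X : Finset α, s ∈ X ∧ t ∉ X ∧ ∀ u ∈ X, ∀ v, r u v → v ∈ X := by
  classical
  refine ⟨univ.filter (ReflTransGen r s), ?_, ?_, ?_⟩ <;>
    simp only [mem_filter, mem_univ, true_and]
  · exact ReflTransGen.refl
  · exact h
  · exact fun u hu v huv => hu.tail huv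

section

variable {V : Type*} [DecidableEq V]

def netOutflow (F : Finset (V × V)) (v : V) : ℤ :=
  ∑ e ∈ F, ((if e.1 = v then 1 else 0) - if e.2 = v then 1 else 0)

theorem netOutflow_empty (v : V) : netOutflow ∅ v = 0 :=
  sum_empty

theorem netOutflow_union {F G : Finset (V × V)} (h : Disjoint F G) (v : V) :
    netOutflow (F ∪ G) v = netOutflow F v + netOutflow G v :=
  sum_union h

theorem netOutflow_sdiff {F G : Finset (V × V)} (h : G ⊆ F) (v : V) :
    netOutflow (F \ G) v = netOutflow F v - netOutflow G v :=
  sum_sdiff_eq_sub h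

theorem netOutflow_insert {F : Finset (V × V)} {e : V × V} (he : e ∉ F) (v : V) :
    netOutflow (insert e F) v =
      ((if e.1 = v then 1 else 0) - if e.2 = v then 1 else 0) + netOutflow F v :=
  sum_insert he

theorem netOutflow_image_swap (F : Finset (V × V)) (v : V) :
    netOutflow (F.image Prod.swap) v = -netOutflow F v := by
  rw [netOutflow, sum_image Prod.swap_injective.injOn, netOutflow, ← sum_neg_distrib]
  simp

theorem sum_netOutflow [Fintype V] (F : Finset (V × V)) (X : Finset V) :
    ∑ v ∈ X, netOutflow F v = #(cutArcs F X) - #(cutArcs F Xᶜ) := by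
  simp only [netOutflow, cutArcs, natCast_card_filter]
  rw [sum_comm, ← sum_sub_distrib]
  refine sum_congr rfl fun e _ => ?_
  rw [sum_sub_distrib, sum_ite_eq, sum_ite_eq]
  by_cases h₁ : e.1 ∈ X <;> by_cases h₂ : e.2 ∈ X <;> simp [h₁, h₂]

/-- `F` is the arc set of an integral `s`-`t` flow of value `k` with unit capacities. -/
def IsFlow (F : Finset (V × V)) (s t : V) (k : ℕ) : Prop :=
  (∀ v, v ≠ s → v ≠ t → netOutflow F v = 0) ∧ netOutflow F s = k

theorem IsFlow.value_eq_card_cutArcs_sub [Fintype V] {F : Finset (V × V)} {s t : V} {k : ℕ}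
    (hF : IsFlow F s t k) {X : Finset V} (hs : s ∈ X) (ht : t ∉ X) :
    (k : ℤ) = #(cutArcs F X) - #(cutArcs F Xᶜ) := by
  rw [← sum_netOutflow, sum_eq_single s, hF.2]
  · exact fun v hv hvs => hF.1 v hvs (ne_of_mem_of_not_mem hv ht)
  · exact fun h => absurd hs h

def List.arcs (L : List V) : Finset (V × V) := (L.zip L.tail).toFinset

theorem List.arcs_singleton (a : V) : [a].arcs = ∅ := rfl

theorem List.arcs_cons_cons (a b : V) (l : List V) :
    (a :: b :: l).arcs = insert (a, b) (b :: l).arcs := by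
  simp [List.arcs]

theorem List.fst_mem_of_mem_arcs {L : List V} {e : V × V} (h : e ∈ L.arcs) : e.1 ∈ L :=
  (List.of_mem_zip (List.mem_toFinset.mp h)).1

theorem List.IsChain.rel_of_mem_arcs {r : V → V → Prop} :
    ∀ {L : List V}, L.IsChain r → ∀ e ∈ L.arcs, r e.1 e.2
  | [], _, _, he => by simp [List.arcs] at he
  | [_], _, _, he => by simp [List.arcs] at he
  | a :: b :: l, hL, e, he => by
    rw [List.arcs_cons_cons, mem_insert] at he
    rw [List.isChain_cons_cons] at hL
    rcases he with rfl | he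
    exacts [hL.1, rel_of_mem_arcs hL.2 e he]

theorem netOutflow_arcs : ∀ (a : V) (l : List V), (a :: l).Nodup → ∀ v,
    netOutflow (a :: l).arcs v =
      (if a = v then 1 else 0) - if (a :: l).getLast (List.cons_ne_nil a l) = v then 1 else 0
  | a, [], _, v => by rw [List.arcs_singleton, netOutflow_empty, List.getLast_singleton, sub_self]
  | a, b :: l, h, v => by
    have hab : (a, b) ∉ (b :: l).arcs :=
      fun h' => (List.nodup_cons.mp h).1 (List.fst_mem_of_mem_arcs h')
    rw [List.arcs_cons_cons, netOutflow_insert hab, netOutflow_arcs b l h.of_cons,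
      List.getLast_cons_cons]
    ring

theorem IsPathArcs.netOutflow_eq {s t : V} {P : Finset (V × V)} (hP : IsPathArcs s t P) (v : V) :
    netOutflow P v = (if s = v then 1 else 0) - if t = v then 1 else 0 := by
  obtain ⟨_ | ⟨a, l⟩, hs, ht, hnd, rfl⟩ := hP
  · simp at hs
  · rw [List.getLast?_eq_some_getLast (List.cons_ne_nil a l), Option.some_inj] at ht
    obtain rfl := Option.some_inj.mp hs
    rw [← ht]
    exact netOutflow_arcs a l hnd v

theorem exists_isPathArcs_of_reflTransGen {r : V → V → Prop} {s t : V}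
    (h : ReflTransGen r s t) : ∃ P, IsPathArcs s t P ∧ ∀ e ∈ P, r e.1 e.2 := by
  suffices ∃ L : List V, L.head? = some s ∧ L.getLast? = some t ∧ L.Nodup ∧ L.IsChain r by
    obtain ⟨L, hs, ht, hnd, hr⟩ := this
    exact ⟨L.arcs, ⟨L, hs, ht, hnd, rfl⟩, hr.rel_of_mem_arcs⟩
  induction h using ReflTransGen.head_induction_on with
  | refl => exact ⟨[t], rfl, rfl, List.nodup_singleton t, List.isChain_singleton t⟩
  | @head a b hab _ ih =>
    obtain ⟨L, hs, ht, hnd, hr⟩ := ih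
    by_cases ha : a ∈ L
    · obtain ⟨L₁, L₂, rfl⟩ := List.append_of_mem ha
      refine ⟨a :: L₂, rfl, ?_, hnd.sublist (List.sublist_append_right _ _),
        hr.suffix (List.suffix_append _ _)⟩
      simpa using ht
    · obtain _ | ⟨b', L⟩ := L
      · simp at hs
      obtain rfl : b' = b := Option.some_inj.mp hs
      exact ⟨a :: b' :: L, rfl, by simpa using ht, List.nodup_cons.mpr ⟨ha, hnd⟩,
        List.isChain_cons_cons.mpr ⟨hab, hr⟩⟩


theorem HasDisjointPaths.mono {S T : Finset (V × V)} {s t : V} {k : ℕ} (hST : S ⊆ T)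
    (h : HasDisjointPaths S s t k) : HasDisjointPaths T s t k :=
  let ⟨P, hPS, hdisj, hP⟩ := h
  ⟨P, fun i => (hPS i).trans hST, hdisj, hP⟩

theorem hasDisjointPaths_zero (S : Finset (V × V)) (s t : V) : HasDisjointPaths S s t 0 :=
  ⟨fun i => i.elim0, fun i => i.elim0, fun i => i.elim0, fun i => i.elim0⟩

theorem hasDisjointPaths_self (S : Finset (V × V)) (s : V) (k : ℕ) : HasDisjointPaths S s s k :=
  ⟨fun _ => ∅, fun _ => empty_subset S, fun _ _ _ => disjoint_empty_left ∅,
    fun _ => ⟨[s], rfl, rfl, List.nodup_singleton s, rfl⟩⟩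

theorem HasDisjointPaths.of_sdiff {S P : Finset (V × V)} {s t : V} {k : ℕ} (hPS : P ⊆ S)
    (hP : IsPathArcs s t P) (h : HasDisjointPaths (S \ P) s t k) :
    HasDisjointPaths S s t (k + 1) := by
  obtain ⟨Q, hQS, hQdisj, hQ⟩ := h
  have hPQ : ∀ i, Disjoint P (Q i) :=
    fun i => disjoint_left.mpr fun e he he' => (mem_sdiff.mp (hQS i he')).2 he
  refine ⟨Fin.cons P Q, Fin.cases hPS fun i => (hQS i).trans sdiff_subset, ?_, Fin.cases hP hQ⟩
  intro i j hij
  cases i using Fin.cases <;> cases j using Fin.cases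
  · exact absurd rfl hij
  · exact hPQ _
  · exact (hPQ _).symm
  · exact hQdisj _ _ (ne_of_apply_ne Fin.succ hij)

theorem IsFlow.exists_isPathArcs [Fintype V] {F : Finset (V × V)} {s t : V} {k : ℕ}
    (hF : IsFlow F s t k) (hk : 0 < k) : ∃ P ⊆ F, IsPathArcs s t P := by
  by_cases h : ReflTransGen (fun u v => (u, v) ∈ F) s t
  · obtain ⟨P, hP, hPF⟩ := exists_isPathArcs_of_reflTransGen h
    exact ⟨P, fun e he => hPF e he, hP⟩
  · obtain ⟨X, hs, ht, hX⟩ := exists_closed_of_not_reflTransGen h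
    have hout : cutArcs F X = ∅ :=
      filter_eq_empty_iff.mpr fun e he hcut => hcut.2 (hX e.1 hcut.1 e.2 he)
    have := hF.value_eq_card_cutArcs_sub hs ht
    rw [hout, card_empty] at this
    omega

theorem IsFlow.sdiff_path {F P : Finset (V × V)} {s t : V} {k : ℕ} (hF : IsFlow F s t (k + 1))
    (hst : s ≠ t) (hPF : P ⊆ F) (hP : IsPathArcs s t P) : IsFlow (F \ P) s t k := by
  refine ⟨fun v hvs hvt => ?_, ?_⟩
  · rw [netOutflow_sdiff hPF, hF.1 v hvs hvt, hP.netOutflow_eq, if_neg (Ne.symm hvs),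
      if_neg (Ne.symm hvt), sub_self, sub_zero]
  · rw [netOutflow_sdiff hPF, hF.2, hP.netOutflow_eq, if_pos rfl, if_neg hst.symm]
    push_cast
    ring

theorem IsFlow.hasDisjointPaths [Fintype V] {s t : V} (hst : s ≠ t) :
    ∀ {k : ℕ} {F : Finset (V × V)}, IsFlow F s t k → HasDisjointPaths F s t k
  | 0, F, _ => hasDisjointPaths_zero F s t
  | k + 1, _, hF =>
    let ⟨_, hPF, hP⟩ := hF.exists_isPathArcs k.succ_pos
    .of_sdiff hPF hP ((hF.sdiff_path hst hPF hP).hasDisjointPaths hst)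

def residualAdj (S F : Finset (V × V)) (u v : V) : Prop :=
  ((u, v) ∈ S ∧ (u, v) ∉ F) ∨ (v, u) ∈ F

theorem IsFlow.augment {S F P : Finset (V × V)} {s t : V} {k : ℕ} (hF : IsFlow F s t k)
    (hst : s ≠ t) (hFS : F ⊆ S) (hP : IsPathArcs s t P)
    (hPr : ∀ e ∈ P, residualAdj S F e.1 e.2) : ∃ F' ⊆ S, IsFlow F' s t (k + 1) := by
  classical
  set fwd := P.filter fun e => e ∈ S ∧ e ∉ F
  set bwd := P.filter fun e => ¬(e ∈ S ∧ e ∉ F)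
  have hbwd : bwd.image Prod.swap ⊆ F := by
    rintro _ h
    obtain ⟨e, he, rfl⟩ := mem_image.mp h
    exact ((hPr e (mem_filter.mp he).1).resolve_left (mem_filter.mp he).2)
  have hdisj : Disjoint (F \ bwd.image Prod.swap) fwd :=
    disjoint_right.mpr fun e he heF => (mem_filter.mp he).2.2 (mem_sdiff.mp heF).1
  have hnet : ∀ v, netOutflow ((F \ bwd.image Prod.swap) ∪ fwd) v =
      netOutflow F v + netOutflow P v := by
    intro v
    have hsplit : netOutflow P v = netOutflow fwd v + netOutflow bwd v := by
      rw [← netOutflow_union (disjoint_filter_filter_not P P _), filter_union_filter_not_eq]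
    rw [netOutflow_union hdisj, netOutflow_sdiff hbwd, netOutflow_image_swap, hsplit]
    ring
  have hfwd : fwd ⊆ S := fun e he => (mem_filter.mp he).2.1
  refine ⟨(F \ bwd.image Prod.swap) ∪ fwd, union_subset (sdiff_subset.trans hFS) hfwd,
    fun v hvs hvt => ?_, ?_⟩
  · rw [hnet, hF.1 v hvs hvt, hP.netOutflow_eq, if_neg (Ne.symm hvs), if_neg (Ne.symm hvt)]
    simp
  · rw [hnet, hF.2, hP.netOutflow_eq, if_pos rfl, if_neg hst.symm]
    push_cast
    ring

theorem IsFlow.exists_cut_of_not_reflTransGen [Fintype V] {S F : Finset (V × V)} {s t : V}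
    {k : ℕ} (hF : IsFlow F s t k) (h : ¬ReflTransGen (residualAdj S F) s t) :
    ∃ X : Finset V, s ∈ X ∧ t ∉ X ∧ #(cutArcs S X) ≤ k := by
  obtain ⟨X, hs, ht, hX⟩ := exists_closed_of_not_reflTransGen h
  have hin : cutArcs F Xᶜ = ∅ := by
    refine filter_eq_empty_iff.mpr fun e he hcut => ?_
    rw [mem_compl, mem_compl, not_not] at hcut
    exact hcut.1 (hX e.2 hcut.2 e.1 (Or.inr he))
  have hout : cutArcs S X ⊆ cutArcs F X := by
    intro e he
    obtain ⟨heS, h₁, h₂⟩ := mem_filter.mp he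
    refine mem_filter.mpr ⟨?_, h₁, h₂⟩
    by_contra heF
    exact h₂ (hX e.1 h₁ e.2 (Or.inl ⟨heS, heF⟩))
  have := hF.value_eq_card_cutArcs_sub hs ht
  rw [hin, card_empty] at this
  exact ⟨X, hs, ht, (card_le_card hout).trans (by omega)⟩

theorem exists_isFlow_of_le_card_cutArcs [Fintype V] {S : Finset (V × V)} {s t : V}
    (hst : s ≠ t) {k : ℕ}
    (hcut : ∀ X : Finset V, s ∈ X → t ∉ X → k ≤ #(cutArcs S X)) :
    ∃ F ⊆ S, IsFlow F s t k := by
  induction k with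
  | zero => exact ⟨∅, empty_subset S, fun v _ _ => netOutflow_empty v, netOutflow_empty s⟩
  | succ k ih =>
    obtain ⟨F, hFS, hF⟩ := ih fun X hs ht => (hcut X hs ht).trans' k.le_succ
    by_cases h : ReflTransGen (residualAdj S F) s t
    · obtain ⟨P, hP, hPr⟩ := exists_isPathArcs_of_reflTransGen h
      exact hF.augment hst hFS hP hPr
    · obtain ⟨X, hs, ht, hX⟩ := hF.exists_cut_of_not_reflTransGen h
      exact absurd (hcut X hs ht) (by omega)

theorem hasDisjointPaths_of_le_card_cutArcs [Fintype V] {S : Finset (V × V)} {s t : V} {k : ℕ}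
    (hcut : ∀ X : Finset V, s ∈ X → t ∉ X → k ≤ #(cutArcs S X)) :
    HasDisjointPaths S s t k := by
  rcases eq_or_ne s t with rfl | hst
  · exact hasDisjointPaths_self S s k
  obtain ⟨F, hFS, hF⟩ := exists_isFlow_of_le_card_cutArcs hst hcut
  exact (hF.hasDisjointPaths hst).mono hFS

theorem cutArcs_erase (S : Finset (V × V)) (f : V × V) (X : Finset V) :
    cutArcs (S.erase f) X = (cutArcs S X).erase f :=
  filter_erase _ _ _

end

theorem Finset.le_card_erase_of_le_card_sdiff_or_succ_le_card {α : Type*} [DecidableEq α]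
    {Z M : Finset α} {f : α} {ℓ : ℕ} (hf : f ∈ M)
    (h : ℓ ≤ #(Z \ M) ∨ ℓ + 1 ≤ #Z) : ℓ ≤ #(Z.erase f) := by
  rcases h with h | h
  · refine h.trans (card_le_card fun e he => mem_erase.mpr ⟨?_, (mem_sdiff.mp he).1⟩)
    rintro rfl
    exact (mem_sdiff.mp he).2 hf
  · have := pred_card_le_card_erase (s := Z) (a := f)
    omega


theorem stmt13_general {V : Type*} [Fintype V] [DecidableEq V] (Y M : Finset (V × V))
    (s t : V) (ℓ : ℕ)
    (hcut : ∀ V' : Finset V, s ∈ V' → t ∉ V' →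
      ℓ ≤ ((cutArcs Y V') \ M).card ∨ ℓ + 1 ≤ (cutArcs Y V').card) :
    ftfFeasible Y M s t ℓ := fun _ hf =>
  hasDisjointPaths_of_le_card_cutArcs fun X hs ht => by
    rw [cutArcs_erase]
    exact le_card_erase_of_le_card_sdiff_or_succ_le_card hf (hcut X hs ht)

/-- Sufficiency of the cut condition for FTF: if every `s`-`t` cut of `(V, Y)`
contains at least `ℓ` safe arcs or at least `ℓ + 1` arcs, then `Y` is a feasible FTF
solution: for every `f ∈ M` the graph `(V, Y \ {f})` contains `ℓ` pairwise
arc-disjoint directed `s`-`t` paths. -/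
theorem stmt13 {V : Type*} [Fintype V] [DecidableEq V] (A Y M : Finset (V × V))
    (s t : V) (ℓ : ℕ) (hℓ : 1 ≤ ℓ) (hMA : M ⊆ A) (hYA : Y ⊆ A)
    (hcut : ∀ V' : Finset V, s ∈ V' → t ∉ V' →
      ℓ ≤ ((cutArcs Y V') \ M).card ∨ ℓ + 1 ≤ (cutArcs Y V').card) :
    ftfFeasible Y M s t ℓ :=
  stmt13_general Y M s t ℓ hcut
end

section
/- Let G = (U,W,E) be a bipartite graph with |U| = |W| = n. Construct a directed graph D' on vertex set U ∪ W ∪ {s,t} with arc set A_s = {(s,u) : u ∈ U}, A_t = {(w,t) : w ∈ W}, and all arcs (u,w) for u ∈ U, w ∈ W; let the vulnerable arcs be M = {(u,w) : uw ∈ E}. Then for every set X of edges of the bipartite complement of G (pairs uw with u ∈ U, w ∈ W, uw ∉ E), the arc set A_s ∪ A_t ∪ {(u,w) : uw ∈ E ∪ X} is a feasible FTF solution with ℓ = n on (D', s, t, M) if and only if for every edge e ∈ E the bipartite graph (U, W, (E ∪ X)∖{e}) contains a perfect matching. -/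
/-- The vertex set of the constructed digraph: `Sum.inl (Sum.inl u)` are the vertices
of `U`, `Sum.inl (Sum.inr w)` those of `W`, `Sum.inr false` is `s`, `Sum.inr true` is `t`. -/
abbrev BipVert (n : ℕ) : Type := (Fin n ⊕ Fin n) ⊕ Bool

/-- The arcs of the constructed digraph corresponding to a set `B` of bipartite pairs. -/
def midArcs (n : ℕ) (B : Finset (Fin n × Fin n)) : Finset (BipVert n × BipVert n) :=
  B.image (fun p => ((Sum.inl (Sum.inl p.1) : BipVert n), (Sum.inl (Sum.inr p.2) : BipVert n)))

/-! Every `s`-`t` path in the constructed digraph has the form `s → u → w → t` with `uw` an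
available edge. Arc-disjointness of `n` such paths forces distinct arcs out of `s` and into `t`,
so the paths are exactly the edges of a perfect matching. Removing the vulnerable arc `(u, w)` is
the same as removing the edge `uw` from the bipartite graph. -/

open Finset

section RobustMatchingReduction

variable {n : ℕ}

def reductionArcs (n : ℕ) (B : Finset (Fin n × Fin n)) : Finset (BipVert n × BipVert n) :=
  (Finset.univ.image
      (fun u : Fin n => ((Sum.inr false : BipVert n), (Sum.inl (Sum.inl u) : BipVert n)))) ∪
  (Finset.univ.image
      (fun w : Fin n => ((Sum.inl (Sum.inr w) : BipVert n), (Sum.inr true : BipVert n)))) ∪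
  midArcs n B

def stPath (u w : Fin n) : Finset (BipVert n × BipVert n) :=
  {(Sum.inr false, Sum.inl (Sum.inl u)), (Sum.inl (Sum.inl u), Sum.inl (Sum.inr w)),
    (Sum.inl (Sum.inr w), Sum.inr true)}

variable {B : Finset (Fin n × Fin n)}

lemma exists_eq_of_source_mem_reductionArcs {b : BipVert n}
    (h : (Sum.inr false, b) ∈ reductionArcs n B) : ∃ u, b = Sum.inl (Sum.inl u) := by
  simpa [reductionArcs, midArcs, eq_comm] using h

lemma exists_mem_of_left_mem_reductionArcs {u : Fin n} {b : BipVert n}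
    (h : (Sum.inl (Sum.inl u), b) ∈ reductionArcs n B) :
    ∃ w, (u, w) ∈ B ∧ b = Sum.inl (Sum.inr w) := by
  simpa [reductionArcs, midArcs, eq_comm] using h

lemma eq_sink_of_right_mem_reductionArcs {w : Fin n} {b : BipVert n}
    (h : (Sum.inl (Sum.inr w), b) ∈ reductionArcs n B) : b = Sum.inr true := by
  simpa [reductionArcs, midArcs, eq_comm] using h

lemma sink_not_mem_reductionArcs (b : BipVert n) :
    (Sum.inr true, b) ∉ reductionArcs n B := by
  simp [reductionArcs, midArcs]

lemma eq_stPath_of_isPathArcs {P : Finset (BipVert n × BipVert n)}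
    (hP : P ⊆ reductionArcs n B) (hpath : IsPathArcs (Sum.inr false) (Sum.inr true) P) :
    ∃ u w, (u, w) ∈ B ∧ P = stPath u w := by
  obtain ⟨L, hhead, hlast, -, rfl⟩ := hpath
  rcases L with _ | ⟨a, _ | ⟨b, l⟩⟩
  · simp at hhead
  · simp_all
  obtain rfl : a = Sum.inr false := by simpa using hhead
  obtain ⟨u, rfl⟩ :=
    exists_eq_of_source_mem_reductionArcs (hP (show (Sum.inr false, b) ∈ _ by simp))
  rcases l with _ | ⟨c, l⟩
  · simp at hlast
  obtain ⟨w, huw, rfl⟩ :=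
    exists_mem_of_left_mem_reductionArcs (hP (show (Sum.inl (Sum.inl u), c) ∈ _ by simp))
  rcases l with _ | ⟨d, l⟩
  · simp at hlast
  obtain rfl :=
    eq_sink_of_right_mem_reductionArcs (hP (show (Sum.inl (Sum.inr w), d) ∈ _ by simp))
  rcases l with _ | ⟨x, l⟩
  · exact ⟨u, w, huw, by simp [stPath]⟩
  · exact absurd (hP (show (Sum.inr true, x) ∈ _ by simp)) (sink_not_mem_reductionArcs x)

lemma isPathArcs_stPath (u w : Fin n) :
    IsPathArcs (Sum.inr false) (Sum.inr true) (stPath u w) :=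
  ⟨[Sum.inr false, Sum.inl (Sum.inl u), Sum.inl (Sum.inr w), Sum.inr true], rfl, rfl,
    by simp, by simp [stPath]⟩

lemma stPath_subset_reductionArcs {u w : Fin n} (h : (u, w) ∈ B) :
    stPath u w ⊆ reductionArcs n B := by
  simp [stPath, reductionArcs, midArcs, insert_subset_iff, h]

lemma disjoint_stPath_iff {u w u' w' : Fin n} :
    Disjoint (stPath u w) (stPath u' w') ↔ u ≠ u' ∧ w ≠ w' := by
  simp +contextual [stPath, eq_comm, iff_def]

lemma erase_reductionArcs (e : Fin n × Fin n) :
    (reductionArcs n B).erase (Sum.inl (Sum.inl e.1), Sum.inl (Sum.inr e.2)) =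
      reductionArcs n (B.erase e) := by
  ext ⟨a, b⟩
  simp only [reductionArcs, midArcs, mem_erase, mem_union, mem_image, mem_univ, true_and]
  aesop

lemma hasDisjointPaths_reductionArcs_iff :
    HasDisjointPaths (reductionArcs n B) (Sum.inr false) (Sum.inr true) n ↔
      ∃ σ : Equiv.Perm (Fin n), ∀ i, (i, σ i) ∈ B := by
  constructor
  · rintro ⟨P, hsub, hdisj, hpath⟩
    choose u w huw hP using fun i => eq_stPath_of_isPathArcs (hsub i) (hpath i)
    have hne : ∀ i j, i ≠ j → u i ≠ u j ∧ w i ≠ w j := fun i j hij =>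
      disjoint_stPath_iff.1 (hP i ▸ hP j ▸ hdisj i j hij)
    have hu : Function.Bijective u := Finite.injective_iff_bijective.1 fun i j h =>
      by_contra fun hij => (hne i j hij).1 h
    have hw : Function.Bijective w := Finite.injective_iff_bijective.1 fun i j h =>
      by_contra fun hij => (hne i j hij).2 h
    refine ⟨(Equiv.ofBijective u hu).symm.trans (Equiv.ofBijective w hw), fun i => ?_⟩
    simpa [Equiv.ofBijective_apply_symm_apply] using huw ((Equiv.ofBijective u hu).symm i)
  · rintro ⟨σ, hσ⟩
    exact ⟨fun i => stPath i (σ i), fun i => stPath_subset_reductionArcs (hσ i),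
      fun i j hij => disjoint_stPath_iff.2 ⟨hij, σ.injective.ne hij⟩,
      fun i => isPathArcs_stPath i (σ i)⟩

end RobustMatchingReduction

theorem stmt17_general (n : ℕ) (E X : Finset (Fin n × Fin n)) :
    ftfFeasible
      ((Finset.univ.image
          (fun u : Fin n => ((Sum.inr false : BipVert n), (Sum.inl (Sum.inl u) : BipVert n)))) ∪
       (Finset.univ.image
          (fun w : Fin n => ((Sum.inl (Sum.inr w) : BipVert n), (Sum.inr true : BipVert n)))) ∪
       midArcs n (E ∪ X))
      (midArcs n E) (Sum.inr false) (Sum.inr true) n ↔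
    ∀ e ∈ E, ∃ σ : Equiv.Perm (Fin n), ∀ i : Fin n, (i, σ i) ∈ (E ∪ X).erase e := by
  change ftfFeasible (reductionArcs n (E ∪ X)) _ _ _ _ ↔ _
  simp only [ftfFeasible, midArcs, forall_mem_image, erase_reductionArcs,
    hasDisjointPaths_reductionArcs_iff]

/-- Correctness of the reduction from Weighted Robust Matching Augmentation to FTF:
given a balanced bipartite graph `(U, W, E)` with `|U| = |W| = n`, add vertices `s, t`,
arcs `A_s` from `s` to all of `U`, arcs `A_t` from all of `W` to `t`, and all arcs from
`U` to `W`, the vulnerable ones being `M = {(u, w) : uw ∈ E}`. Then for every set `X`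
of non-edges of `E`, the arc set `A_s ∪ A_t ∪ {(u, w) : uw ∈ E ∪ X}` is a feasible FTF
solution with `ℓ = n` iff for every `e ∈ E` the bipartite graph `(U, W, (E ∪ X) \ {e})`
contains a perfect matching. -/
theorem stmt17 (n : ℕ) (E X : Finset (Fin n × Fin n))
    (hX : ∀ p ∈ X, p ∉ E) :
    ftfFeasible
      ((Finset.univ.image
          (fun u : Fin n => ((Sum.inr false : BipVert n), (Sum.inl (Sum.inl u) : BipVert n)))) ∪
       (Finset.univ.image
          (fun w : Fin n => ((Sum.inl (Sum.inr w) : BipVert n), (Sum.inr true : BipVert n)))) ∪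
       midArcs n (E ∪ X))
      (midArcs n E) (Sum.inr false) (Sum.inr true) n ↔
    ∀ e ∈ E, ∃ σ : Equiv.Perm (Fin n), ∀ i : Fin n, (i, σ i) ∈ (E ∪ X).erase e :=
  stmt17_general n E X
end
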